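/- arXiv:2202.06433 — 9 statements merged into one kernel-verified Lean document; each statement's English description precedes it below -/
import Mathlib

section
/- Let H be a functional Hilbert space of holomorphic functions on the open unit disc and let f ∈ H. Then the operator M_z + f⊗1 on H is analytic if and only if exactly one of the following holds: (i) f(0) = 0; (ii) f(0) ≠ 0 and the formal power series ∑_{j=0}^∞ (∑_{i=0}^j f̂(j−i)/f(0)^i) z^j does not belong to H, where f̂(n) denotes the n-th Taylor coefficient of f at 0 ('belongs to H' means there is an element of H whose Taylor coefficients at 0 are the coefficients of this series). -/
open scoped InnerProductSpace

/-- The rank one operator `f ⊗ g` given by `(f ⊗ g) h = ⟨h, g⟩ f`, where the inner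
product is linear in the first argument (i.e. `⟪g, h⟫_ℂ • f` in Mathlib's convention). -/
noncomputable def rankOne {H : Type*} [NormedAddCommGroup H] [InnerProductSpace ℂ H]
    (f g : H) : H →L[ℂ] H := (innerSL ℂ g).smulRight f

/-- The `n`-th Taylor coefficient at `0` of a function `φ : ℂ → ℂ`. -/
noncomputable def taylorCoeff (φ : ℂ → ℂ) (n : ℕ) : ℂ :=
  iteratedDeriv n φ 0 / (n.factorial : ℂ)

/-- A realization of a complex Hilbert space `H` as a *functional Hilbert space* of
holomorphic functions on the open unit disc `𝔻`:  elements of `H` are identified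
(injectively and linearly) with holomorphic functions on `𝔻`; `h ∈ H` iff `z·h ∈ H`;
the multiplication operator `M_z` is a bounded operator on `H`; the constant function
`1` belongs to `H` and `⟨h, 1⟩ = h(0)` for all `h ∈ H` (inner product linear in the
first argument). -/
structure FunctionalHilbertSpace (H : Type*) [NormedAddCommGroup H]
    [InnerProductSpace ℂ H] [CompleteSpace H] where
  toFun : H →ₗ[ℂ] (ℂ → ℂ)
  holo : ∀ h : H, DifferentiableOn ℂ (toFun h) (Metric.ball (0 : ℂ) 1)
  sep : ∀ h₁ h₂ : H, Set.EqOn (toFun h₁) (toFun h₂) (Metric.ball (0 : ℂ) 1) → h₁ = h₂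
  Mz : H →L[ℂ] H
  Mz_apply : ∀ h : H, ∀ z ∈ Metric.ball (0 : ℂ) 1, toFun (Mz h) z = z * toFun h z
  shift_mem : ∀ φ : ℂ → ℂ, DifferentiableOn ℂ φ (Metric.ball (0 : ℂ) 1) →
    ((∃ h : H, Set.EqOn (toFun h) φ (Metric.ball (0 : ℂ) 1)) ↔
      (∃ h : H, Set.EqOn (toFun h) (fun z => z * φ z) (Metric.ball (0 : ℂ) 1)))
  one : H
  one_apply : ∀ z ∈ Metric.ball (0 : ℂ) 1, toFun one z = 1
  inner_one : ∀ h : H, ⟪one, h⟫_ℂ = toFun h 0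



theorem tc_eq_coeff {φ : ℂ → ℂ} {p : FormalMultilinearSeries ℂ ℂ ℂ}
    (h : HasFPowerSeriesAt φ p 0) (n : ℕ) : taylorCoeff φ n = p.coeff n := by
  obtain ⟨r, hr⟩ := h
  have h2 := hr.factorial_smul (1 : ℂ) n
  unfold taylorCoeff
  rw [iteratedDeriv_eq_iteratedFDeriv, ← h2, nsmul_eq_mul]
  have : p.coeff n = p n fun _ => 1 := rfl
  rw [this]
  field_simp [Nat.factorial_ne_zero]

open Filter in
/-- Representation: the Taylor coefficients sum to the function near 0. -/
theorem rep_of_analytic {φ : ℂ → ℂ} (h : AnalyticAt ℂ φ 0) :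
    ∀ᶠ z in nhds (0:ℂ), HasSum (fun n => taylorCoeff φ n * z ^ n) (φ z) := by
  obtain ⟨p, hp⟩ := h
  have := hasFPowerSeriesAt_iff.1 hp
  filter_upwards [this] with z hz
  have : ∀ n, taylorCoeff φ n * z ^ n = z ^ n • p.coeff n := by
    intro n; rw [tc_eq_coeff hp, smul_eq_mul, mul_comm]
  rw [funext this, show φ z = φ (0 + z) by rw [zero_add]]
  exact hz

open Filter in
/-- Uniqueness of coefficients. -/
theorem coeff_unique {φ : ℂ → ℂ} {a b : ℕ → ℂ}
    (ha : ∀ᶠ z in nhds (0:ℂ), HasSum (fun n => a n * z ^ n) (φ z))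
    (hb : ∀ᶠ z in nhds (0:ℂ), HasSum (fun n => b n * z ^ n) (φ z)) : a = b := by
  have key : ∀ (c : ℕ → ℂ), (∀ᶠ z in nhds (0:ℂ), HasSum (fun n => c n * z ^ n) (φ z)) →
      HasFPowerSeriesAt φ (FormalMultilinearSeries.ofScalars ℂ c) 0 := by
    intro c hc
    rw [hasFPowerSeriesAt_iff]
    filter_upwards [hc] with z hz
    have : ∀ n, z ^ n • (FormalMultilinearSeries.ofScalars ℂ c).coeff n = c n * z ^ n := by
      intro n
      have : (FormalMultilinearSeries.ofScalars ℂ c).coeff n = c n := by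
        show (FormalMultilinearSeries.ofScalars ℂ c n) (fun _ => 1) = c n
        rw [FormalMultilinearSeries.ofScalars_apply_eq, one_pow, smul_eq_mul, mul_one]
      rw [this, smul_eq_mul, mul_comm]
    rw [funext this, zero_add]
    exact hz
  have := (key a ha).eq_formalMultilinearSeries (key b hb)
  funext n
  have h2 := congrFun this n
  have := congrArg (fun (q : ContinuousMultilinearMap ℂ (fun _ : Fin n => ℂ) ℂ) => q (fun _ => 1)) h2
  simpa [FormalMultilinearSeries.ofScalars] using this

theorem tc0 (φ : ℂ → ℂ) : taylorCoeff φ 0 = φ 0 := by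
  simp [taylorCoeff, iteratedDeriv_zero]

open Filter in
/-- Coefficients of `z ↦ z * φ z + s * ψ z`. -/
theorem tc_combo {φ ψ χ : ℂ → ℂ} {s : ℂ} (hφ : AnalyticAt ℂ φ 0) (hψ : AnalyticAt ℂ ψ 0)
    (hχ : AnalyticAt ℂ χ 0) (hev : ∀ᶠ z in nhds (0:ℂ), χ z = z * φ z + s * ψ z) :
    taylorCoeff χ 0 = s * taylorCoeff ψ 0 ∧
      ∀ k, taylorCoeff χ (k + 1) = taylorCoeff φ k + s * taylorCoeff ψ (k + 1) := by
  set d : ℕ → ℂ := fun n => Nat.rec (s * taylorCoeff ψ 0)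
    (fun k _ => taylorCoeff φ k + s * taylorCoeff ψ (k + 1)) n with hd
  have hrep : ∀ᶠ z in nhds (0:ℂ), HasSum (fun n => d n * z ^ n) (χ z) := by
    filter_upwards [rep_of_analytic hφ, rep_of_analytic hψ, hev] with z hzφ hzψ hzχ
    set u : ℕ → ℂ := fun n => Nat.rec 0 (fun k _ => taylorCoeff φ k * z ^ (k + 1)) n with hu
    have hu1 : HasSum (fun n => u (n + 1)) (z * φ z) := by
      have := hzφ.mul_left z
      convert this using 2 with n
      show taylorCoeff φ n * z ^ (n + 1) = z * (taylorCoeff φ n * z ^ n)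
      ring
      rfl
    have husum : HasSum u (z * φ z) := by
      have h2 := (hasSum_nat_add_iff (f := u) 1).1 hu1
      have h3 : u 0 = 0 := rfl
      simpa [h3] using h2
    have hvsum : HasSum (fun n => s * taylorCoeff ψ n * z ^ n) (s * ψ z) := by
      have := hzψ.mul_left s
      convert this using 2 with n; rfl; ring
    have := husum.add hvsum
    rw [hzχ]
    convert this using 2 with n
    cases n with
    | zero => show d 0 * z ^ 0 = u 0 + s * taylorCoeff ψ 0 * z ^ 0; simp [hd, hu]
    | succ k =>
        show d (k + 1) * z ^ (k + 1) = u (k + 1) + s * taylorCoeff ψ (k + 1) * z ^ (k + 1)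
        show (taylorCoeff φ k + s * taylorCoeff ψ (k + 1)) * z ^ (k + 1)
          = taylorCoeff φ k * z ^ (k + 1) + s * taylorCoeff ψ (k + 1) * z ^ (k + 1)
        ring
  have := coeff_unique (rep_of_analytic hχ) hrep
  exact ⟨congrFun this 0, fun k => congrFun this (k + 1)⟩

open Filter in
theorem tc_smul {ψ χ : ℂ → ℂ} {s : ℂ} (hψ : AnalyticAt ℂ ψ 0)
    (hχ : AnalyticAt ℂ χ 0) (hev : ∀ᶠ z in nhds (0:ℂ), χ z = s * ψ z) (n : ℕ) :
    taylorCoeff χ n = s * taylorCoeff ψ n := by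
  have hrep : ∀ᶠ z in nhds (0:ℂ), HasSum (fun n => (s * taylorCoeff ψ n) * z ^ n) (χ z) := by
    filter_upwards [rep_of_analytic hψ, hev] with z hz hc
    rw [hc]
    have := hz.mul_left s
    convert this using 2 with m; rfl; ring
  exact congrFun (coeff_unique (rep_of_analytic hχ) hrep) n

open Filter in
theorem eqOn_of_tc {φ ψ : ℂ → ℂ} (hφ : DifferentiableOn ℂ φ (Metric.ball 0 1))
    (hψ : DifferentiableOn ℂ ψ (Metric.ball 0 1))
    (h : ∀ n, taylorCoeff φ n = taylorCoeff ψ n) :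
    Set.EqOn φ ψ (Metric.ball (0:ℂ) 1) := by
  have h0 : (0:ℂ) ∈ Metric.ball (0:ℂ) 1 := Metric.mem_ball_self one_pos
  have hφ' := hφ.analyticOnNhd Metric.isOpen_ball
  have hψ' := hψ.analyticOnNhd Metric.isOpen_ball
  have hev : φ =ᶠ[nhds (0:ℂ)] ψ := by
    filter_upwards [rep_of_analytic (hφ' 0 h0), rep_of_analytic (hψ' 0 h0)] with z h1 h2
    refine h1.unique ?_
    have : (fun n => taylorCoeff φ n * z ^ n) = fun n => taylorCoeff ψ n * z ^ n :=
      funext fun n => by rw [h n]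
    rw [this]; exact h2
  exact hφ'.eqOn_of_preconnected_of_eventuallyEq hψ'
    (convex_ball (0:ℂ) 1).isPreconnected h0 hev

open Filter in
theorem analytic_rankOne_perturbation_of_Mz_iff
    {H : Type*} [NormedAddCommGroup H] [InnerProductSpace ℂ H] [CompleteSpace H]
    (e : FunctionalHilbertSpace H) (f : H) :
    (⋂ n : ℕ, Set.range ⇑((e.Mz + rankOne f e.one) ^ n)) = {0} ↔
      (e.toFun f 0 = 0 ∨
        (e.toFun f 0 ≠ 0 ∧
          ¬ ∃ h : H, ∀ j : ℕ, taylorCoeff (e.toFun h) j =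
            ∑ i ∈ Finset.range (j + 1),
              taylorCoeff (e.toFun f) (j - i) / (e.toFun f 0) ^ i)) := by
  classical
  set T : H →L[ℂ] H := e.Mz + rankOne f e.one with hT
  set c : ℂ := e.toFun f 0 with hc
  have hball : Metric.ball (0:ℂ) 1 ∈ nhds (0:ℂ) :=
    Metric.isOpen_ball.mem_nhds (Metric.mem_ball_self one_pos)
  have hA : ∀ h : H, AnalyticAt ℂ (e.toFun h) 0 := fun h => (e.holo h).analyticAt hball
  have hext : ∀ g₁ g₂ : H,
      (∀ n, taylorCoeff (e.toFun g₁) n = taylorCoeff (e.toFun g₂) n) → g₁ = g₂ :=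
    fun g₁ g₂ hcoef => e.sep g₁ g₂ (eqOn_of_tc (e.holo g₁) (e.holo g₂) hcoef)
  have htc0 : ∀ h : H, taylorCoeff (e.toFun h) 0 = e.toFun h 0 := fun h => tc0 _
  have hTapp : ∀ h : H, T h = e.Mz h + (e.toFun h 0) • f := by
    intro h
    simp [hT, rankOne, ContinuousLinearMap.add_apply, ContinuousLinearMap.smulRight_apply,
      innerSL_apply_apply, e.inner_one]
  have hTev : ∀ h : H, ∀ᶠ z in nhds (0:ℂ),
      e.toFun (T h) z = z * e.toFun h z + (e.toFun h 0) * e.toFun f z := by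
    intro h
    filter_upwards [hball] with z hz
    rw [hTapp h, map_add, map_smul]
    simp [e.Mz_apply h z hz, smul_eq_mul]
  have hT0 : ∀ h : H, taylorCoeff (e.toFun (T h)) 0 = taylorCoeff (e.toFun h) 0 * c := by
    intro h
    have hcombo := (tc_combo (hA h) (hA f) (hA (T h)) (hTev h)).1
    rw [hcombo, htc0 f, ← hc, htc0 h]
  have hTk : ∀ (h : H) (k : ℕ), taylorCoeff (e.toFun (T h)) (k + 1) =
      taylorCoeff (e.toFun h) k + taylorCoeff (e.toFun h) 0 * taylorCoeff (e.toFun f) (k + 1) := by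
    intro h k
    have hcombo := (tc_combo (hA h) (hA f) (hA (T h)) (hTev h)).2 k
    rw [hcombo, htc0 h]
  have hsmul : ∀ (s : ℂ) (h : H) (n : ℕ),
      taylorCoeff (e.toFun (s • h)) n = s * taylorCoeff (e.toFun h) n := by
    intro s h n
    refine tc_smul (hA h) (hA (s • h)) ?_ n
    filter_upwards with z
    rw [map_smul]
    rfl
  have hzero : ∀ n, taylorCoeff (e.toFun (0 : H)) n = 0 := by
    intro n
    have h2 := hsmul 0 0 n
    rw [zero_smul] at h2
    rw [h2, zero_mul]
  set G : ℕ → ℂ := fun j => ∑ i ∈ Finset.range (j + 1),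
    taylorCoeff (e.toFun f) (j - i) / c ^ i with hGdef
  have hG0 : G 0 = c := by
    simp [hGdef, htc0 f, ← hc]
  have hGsucc : ∀ k, G (k + 1) = taylorCoeff (e.toFun f) (k + 1) + G k / c := by
    intro k
    show (∑ i ∈ Finset.range (k + 2), taylorCoeff (e.toFun f) (k + 1 - i) / c ^ i) = _
    rw [Finset.sum_range_succ']
    simp only [Nat.succ_sub_succ, pow_succ, ← div_div, Nat.sub_zero, pow_zero, div_one]
    rw [← Finset.sum_div]
    ring
  have hpow1 : ∀ (n : ℕ) (x : H), (T ^ (n + 1)) x = T ((T ^ n) x) := by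
    intro n x
    rw [pow_succ']
    rfl
  have hpow2 : ∀ (n : ℕ) (x : H), (T ^ (n + 1)) x = (T ^ n) (T x) := by
    intro n x
    rw [pow_succ]
    rfl
  constructor
  · intro hS
    by_cases hc0 : c = 0
    · exact Or.inl hc0
    · refine Or.inr ⟨hc0, ?_⟩
      rintro ⟨h, hh⟩
      have hhG : ∀ j, taylorCoeff (e.toFun h) j = G j := hh
      have ha0 : taylorCoeff (e.toFun h) 0 = c := by rw [hhG 0, hG0]
      have hThc : ∀ n, taylorCoeff (e.toFun (T h)) n = taylorCoeff (e.toFun (c • h)) n := by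
        intro n
        rw [hsmul c h n]
        cases n with
        | zero => rw [hT0 h, ha0, mul_comm]
        | succ k =>
            rw [hTk h k, hhG (k + 1), hhG k, ha0, hGsucc k]
            field_simp
            ring
      have hThe : T h = c • h := hext _ _ hThc
      have hne : h ≠ 0 := by
        intro h0
        rw [h0, hzero 0] at ha0
        exact hc0 ha0.symm
      have hpowh : ∀ n, (T ^ n) h = c ^ n • h := by
        intro n
        induction n with
        | zero => simp
        | succ n ih =>
            rw [hpow2 n h, hThe, map_smul, ih, smul_smul, ← pow_succ']
      have hmem : h ∈ ⋂ n, Set.range ⇑(T ^ n) := by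
        refine Set.mem_iInter.2 fun n => ⟨(c⁻¹) ^ n • h, ?_⟩
        rw [map_smul, hpowh n, smul_smul, ← mul_pow, inv_mul_cancel₀ hc0, one_pow, one_smul]
      rw [hS] at hmem
      exact hne hmem
  · intro hRHS
    refine Set.eq_singleton_iff_unique_mem.2 ⟨?_, ?_⟩
    · exact Set.mem_iInter.2 fun n => ⟨0, map_zero _⟩
    · intro g hg
      have hg' : ∀ n, ∃ x, (T ^ n) x = g := fun n => Set.mem_iInter.1 hg n
      rcases hRHS with hc0 | ⟨hc0, hnex⟩
      · have key : ∀ (n : ℕ) (x : H) (k : ℕ), k < n →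
            taylorCoeff (e.toFun ((T ^ n) x)) k = 0 := by
          intro n
          induction n with
          | zero => exact fun x k hk => absurd hk (Nat.not_lt_zero k)
          | succ n ih =>
              intro x k hk
              cases k with
              | zero => rw [hpow1 n x, hT0, hc0, mul_zero]
              | succ j =>
                  rw [hpow1 n x, hTk]
                  have h1 : taylorCoeff (e.toFun ((T ^ n) x)) j = 0 := ih x j (by omega)
                  have h2 : taylorCoeff (e.toFun ((T ^ n) x)) 0 = 0 := ih x 0 (by omega)
                  rw [h1, h2, zero_mul, add_zero]
        refine hext g 0 fun k => ?_
        obtain ⟨x, hx⟩ := hg' (k + 1)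
        rw [← hx, key (k + 1) x k (Nat.lt_succ_self k), hzero k]
      · have hinj : ∀ h₁ h₂ : H, T h₁ = T h₂ → h₁ = h₂ := by
          intro h₁ h₂ h12
          have e0 : taylorCoeff (e.toFun h₁) 0 = taylorCoeff (e.toFun h₂) 0 := by
            have h3 := hT0 h₁
            rw [h12, hT0 h₂] at h3
            exact (mul_right_cancel₀ hc0 h3).symm
          refine hext _ _ fun n => ?_
          have h3 := hTk h₁ n
          rw [h12, hTk h₂, e0] at h3
          exact (add_right_cancel h3).symm
        have hpre : ∀ g' : H, (∀ n, ∃ x, (T ^ n) x = g') →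
            ∃ h' : H, (∀ n, ∃ x, (T ^ n) x = h') ∧ T h' = g' := by
          intro g' hgg
          obtain ⟨x1, hx1⟩ := hgg 1
          rw [pow_one] at hx1
          refine ⟨x1, fun n => ?_, hx1⟩
          obtain ⟨y, hy⟩ := hgg (n + 1)
          have h4 : T ((T ^ n) y) = g' := by rw [← hpow1 n y, hy]
          exact ⟨y, hinj _ _ (by rw [h4, hx1])⟩
        have claim : ∀ (k : ℕ) (g' : H), (∀ n, ∃ x, (T ^ n) x = g') →
            taylorCoeff (e.toFun g') k = taylorCoeff (e.toFun g') 0 / c * G k := by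
          intro k
          induction k with
          | zero => intro g' _; rw [hG0, div_mul_cancel₀ _ hc0]
          | succ k ih =>
              intro g' hgg
              obtain ⟨h', hh', hTh'⟩ := hpre g' hgg
              have h0' : taylorCoeff (e.toFun h') 0 = taylorCoeff (e.toFun g') 0 / c := by
                have h5 := hT0 h'
                rw [hTh'] at h5
                rw [h5]
                field_simp
              have h6 := hTk h' k
              rw [hTh'] at h6
              rw [h6, ih h' hh', h0', hGsucc k]
              field_simp
              ring
        by_contra hgne
        have hg0 : taylorCoeff (e.toFun g) 0 ≠ 0 := by
          intro h00
          apply hgne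
          refine hext g 0 fun n => ?_
          rw [claim n g hg', h00, hzero n]
          simp
        refine absurd ?_ hnex
        refine ⟨(c / taylorCoeff (e.toFun g) 0) • g, fun j => ?_⟩
        show taylorCoeff (e.toFun _) j = G j
        rw [hsmul, claim j g hg']
        field_simp
end

section
/- Let T and K be bounded linear operators on a nonzero complex Hilbert space H with K compact. Then σ_l(T+K) \ σ_p(T+K) ⊆ σ_l(T) and σ_l(T) \ σ_p(T) ⊆ σ_l(T+K). -/
open scoped InnerProductSpace
open Topology

/-- The left spectrum of a bounded operator. -/
def leftSpectrum {H : Type*} [NormedAddCommGroup H] [InnerProductSpace ℂ H]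
    (T : H →L[ℂ] H) : Set ℂ :=
  {l : ℂ | ¬ ∃ L : H →L[ℂ] H, L ∘L (T - l • (1 : H →L[ℂ] H)) = 1}

/-- The point spectrum (set of eigenvalues) of a bounded operator. -/
def pointSpectrum {H : Type*} [NormedAddCommGroup H] [InnerProductSpace ℂ H]
    (T : H →L[ℂ] H) : Set ℂ :=
  {l : ℂ | ∃ h : H, h ≠ 0 ∧ T h = l • h}

section Aux

variable {H : Type*} [NormedAddCommGroup H] [InnerProductSpace ℂ H] [CompleteSpace H]

/-- A bounded-below operator on a Hilbert space has a left inverse. -/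
lemma left_inv_of_bddBelow (S : H →L[ℂ] H) {c : ℝ} (hc : 0 < c)
    (h : ∀ x, c * ‖x‖ ≤ ‖S x‖) : ∃ L : H →L[ℂ] H, L ∘L S = 1 := by
  have hA : AntilipschitzWith ⟨c⁻¹, by positivity⟩ S := by
    apply S.antilipschitz_of_bound
    intro x
    have := h x
    change ‖x‖ ≤ c⁻¹ * ‖S x‖
    rw [← mul_le_mul_iff_right₀ hc, ← mul_assoc, mul_inv_cancel₀ hc.ne', one_mul]
    exact this
  have hclosed : IsClosed (Set.range S) := hA.isClosed_range S.uniformContinuous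
  set R : Submodule ℂ H := LinearMap.range (S : H →ₗ[ℂ] H) with hR
  have hRclosed : IsClosed (R : Set H) := by
    rw [hR, LinearMap.coe_range]; exact hclosed
  haveI : CompleteSpace R := hRclosed.completeSpace_coe
  set Scod : H →L[ℂ] R := S.codRestrict R (fun x => LinearMap.mem_range_self _ x) with hScod
  have hker : LinearMap.ker (Scod : H →ₗ[ℂ] R) = ⊥ := by
    rw [hScod, ContinuousLinearMap.ker_codRestrict]
    exact LinearMap.ker_eq_bot.mpr hA.injective
  have hrange : LinearMap.range (Scod : H →ₗ[ℂ] R) = ⊤ := by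
    rw [Submodule.eq_top_iff']
    rintro ⟨y, hy⟩
    obtain ⟨x, hx⟩ := hy
    exact ⟨x, by ext; exact hx⟩
  set e := ContinuousLinearEquiv.ofBijective Scod hker hrange with he
  refine ⟨(e.symm : R →L[ℂ] H) ∘L (R.orthogonalProjectionOnto), ?_⟩
  ext x
  have h1 : R.orthogonalProjectionOnto (S x) = Scod x :=
    Submodule.orthogonalProjectionOnto_mem_subspace_eq_self (K := R) (Scod x)
  simp only [ContinuousLinearMap.comp_apply, ContinuousLinearMap.one_apply,
    ContinuousLinearEquiv.coe_coe]
  rw [h1, he]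
  exact ContinuousLinearEquiv.ofBijective_symm_apply_apply Scod hker hrange x

/-- An operator with a left inverse is bounded below (on a nontrivial space). -/
lemma bddBelow_of_left_inv [Nontrivial H] {S L : H →L[ℂ] H} (hL : L ∘L S = 1) :
    ∃ c : ℝ, 0 < c ∧ ∀ x, c * ‖x‖ ≤ ‖S x‖ := by
  have hLx : ∀ x, L (S x) = x := fun x => by
    have := congrArg (fun f : H →L[ℂ] H => f x) hL
    simpa using this
  have hLne : L ≠ 0 := by
    intro h0
    obtain ⟨x, hx⟩ := exists_ne (0 : H)
    have := hLx x
    rw [h0] at this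
    simp at this
    exact hx this.symm
  have hLpos : 0 < ‖L‖ := norm_pos_iff.mpr hLne
  refine ⟨‖L‖⁻¹, by positivity, fun x => ?_⟩
  have h1 : ‖x‖ ≤ ‖L‖ * ‖S x‖ := by
    calc ‖x‖ = ‖L (S x)‖ := by rw [hLx x]
    _ ≤ ‖L‖ * ‖S x‖ := L.le_opNorm _
  rw [inv_mul_le_iff₀ hLpos]
  exact h1

/-- Compact perturbation: if `S` is bounded below, `K` is compact and `S + K` is injective,
then `S + K` is bounded below. -/
lemma bddBelow_perturb (S Kc : H →L[ℂ] H) (hK : IsCompactOperator ⇑Kc)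
    {c : ℝ} (hc : 0 < c) (hS : ∀ x, c * ‖x‖ ≤ ‖S x‖)
    (hinj : Function.Injective ⇑(S + Kc)) :
    ∃ c' : ℝ, 0 < c' ∧ ∀ x, c' * ‖x‖ ≤ ‖(S + Kc) x‖ := by
  by_contra hcon
  push_neg at hcon
  -- get unit vectors u n with ‖(S+Kc) (u n)‖ < 1/(n+1)
  have hseq : ∀ n : ℕ, ∃ u : H, ‖u‖ = 1 ∧ ‖(S + Kc) u‖ < 1 / (n + 1 : ℝ) := by
    intro n
    obtain ⟨x, hx⟩ := hcon (1 / (n + 1 : ℝ)) (by positivity)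
    have hxne : x ≠ 0 := by
      intro h0
      rw [h0] at hx
      simp at hx
    have hxn : (0 : ℝ) < ‖x‖ := norm_pos_iff.mpr hxne
    refine ⟨‖x‖⁻¹ • x, ?_, ?_⟩
    · rw [norm_smul, norm_inv, norm_norm, inv_mul_cancel₀ hxn.ne']
    · rw [(S + Kc).map_smul_of_tower, norm_smul, norm_inv, norm_norm]
      rw [inv_mul_lt_iff₀ hxn]
      calc ‖(S + Kc) x‖ < 1 / (n + 1 : ℝ) * ‖x‖ := hx
      _ = ‖x‖ * (1 / (n + 1 : ℝ)) := by ring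
  choose u hu1 hu2 using hseq
  -- (S + Kc) (u n) → 0
  have htend0 : Filter.Tendsto (fun n => (S + Kc) (u n)) Filter.atTop (nhds 0) := by
    rw [tendsto_zero_iff_norm_tendsto_zero]
    apply squeeze_zero (fun n => norm_nonneg _) (fun n => (hu2 n).le)
    exact tendsto_one_div_add_atTop_nhds_zero_nat
  -- compactness: subsequence with Kc (u (φ n)) → y
  have hC : IsCompact (closure (⇑Kc '' Metric.closedBall 0 1)) :=
    IsCompactOperator.isCompact_closure_image_closedBall (𝕜₁ := ℂ)
      (f := (Kc : H →ₗ[ℂ] H)) hK 1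
  have hmem : ∀ n, Kc (u n) ∈ closure (⇑Kc '' Metric.closedBall 0 1) := fun n =>
    subset_closure ⟨u n, by simp [Metric.mem_closedBall, (hu1 n).le], rfl⟩
  obtain ⟨y, _, φ, hφ, hKy⟩ := hC.tendsto_subseq hmem
  -- S (u (φ n)) → -y
  have htendS : Filter.Tendsto (fun n => S (u (φ n))) Filter.atTop (nhds (-y)) := by
    have h1 : ∀ n, S (u (φ n)) = (S + Kc) (u (φ n)) - Kc (u (φ n)) := by
      intro n; simp
    simp_rw [h1]
    have := (htend0.comp hφ.tendsto_atTop).sub hKy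
    simpa using this
  -- antilipschitz & closed embedding
  have hA : AntilipschitzWith ⟨c⁻¹, by positivity⟩ S := by
    apply S.antilipschitz_of_bound
    intro x
    change ‖x‖ ≤ c⁻¹ * ‖S x‖
    rw [← mul_le_mul_iff_right₀ hc, ← mul_assoc, mul_inv_cancel₀ hc.ne', one_mul]
    exact hS x
  have hCE : Topology.IsClosedEmbedding ⇑S := hA.isClosedEmbedding S.uniformContinuous
  -- -y is in the range of S
  have hyr : -y ∈ Set.range ⇑S := by
    have : -y ∈ closure (Set.range ⇑S) :=
      mem_closure_of_tendsto htendS (Filter.Eventually.of_forall fun n => Set.mem_range_self _)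
    rwa [hCE.isClosed_range.closure_eq] at this
  obtain ⟨x, hx⟩ := hyr
  -- u (φ n) → x
  have htendu : Filter.Tendsto (fun n => u (φ n)) Filter.atTop (nhds x) := by
    rw [hCE.toIsEmbedding.toIsInducing.tendsto_nhds_iff]
    show Filter.Tendsto (fun n => S (u (φ n))) Filter.atTop (nhds (S x))
    rwa [hx]
  -- ‖x‖ = 1
  have hnx : ‖x‖ = 1 := by
    have h1 : Filter.Tendsto (fun n => ‖u (φ n)‖) Filter.atTop (nhds ‖x‖) :=
      htendu.norm
    have h2 : Filter.Tendsto (fun n => ‖u (φ n)‖) Filter.atTop (nhds 1) := by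
      simp_rw [hu1]; exact tendsto_const_nhds
    exact tendsto_nhds_unique h1 h2
  -- (S + Kc) x = 0
  have hSKx : (S + Kc) x = 0 := by
    have h1 : Filter.Tendsto (fun n => (S + Kc) (u (φ n))) Filter.atTop (nhds ((S + Kc) x)) :=
      ((S + Kc).continuous.tendsto x).comp htendu
    have h2 : Filter.Tendsto (fun n => (S + Kc) (u (φ n))) Filter.atTop (nhds 0) :=
      htend0.comp hφ.tendsto_atTop
    exact tendsto_nhds_unique h1 h2
  have : x = 0 := hinj (by simpa using hSKx)
  rw [this, norm_zero] at hnx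
  norm_num at hnx

/-- Main auxiliary lemma: if `l ∉ σ_l(T)` and `l ∉ σ_p(T + K)`, then `l ∉ σ_l(T + K)`. -/
lemma not_mem_left_perturb [Nontrivial H] (T Kc : H →L[ℂ] H) (hK : IsCompactOperator ⇑Kc)
    (l : ℂ) (h1 : l ∉ leftSpectrum T) (h2 : l ∉ pointSpectrum (T + Kc)) :
    l ∉ leftSpectrum (T + Kc) := by
  rw [leftSpectrum, Set.mem_setOf_eq, not_not] at h1 ⊢
  obtain ⟨L, hL⟩ := h1
  obtain ⟨c, hc, hS⟩ := bddBelow_of_left_inv hL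
  have hinj : Function.Injective ⇑(T + Kc - l • (1 : H →L[ℂ] H)) := by
    intro a b hab
    have hab' : (T + Kc - l • (1 : H →L[ℂ] H)) (a - b) = 0 := by
      simp only [map_sub, hab, sub_self]
    by_contra hne
    apply h2
    refine ⟨a - b, fun h0 => hne (sub_eq_zero.mp h0), ?_⟩
    have := hab'
    simp only [ContinuousLinearMap.sub_apply, ContinuousLinearMap.smul_apply,
      ContinuousLinearMap.one_apply, sub_eq_zero] at this
    exact this
  have hkey : T + Kc - l • (1 : H →L[ℂ] H) = (T - l • (1 : H →L[ℂ] H)) + Kc := add_sub_right_comm T Kc _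
  rw [hkey] at hinj ⊢
  obtain ⟨c', hc', hS'⟩ := bddBelow_perturb (T - l • (1 : H →L[ℂ] H)) Kc hK hc hS hinj
  exact left_inv_of_bddBelow _ hc' hS'

end Aux

theorem left_spectrum_compact_perturbation_inclusions
    {H : Type*} [NormedAddCommGroup H] [InnerProductSpace ℂ H] [CompleteSpace H]
    [Nontrivial H] (T K : H →L[ℂ] H) (hK : IsCompactOperator ⇑K) :
    leftSpectrum (T + K) \ pointSpectrum (T + K) ⊆ leftSpectrum T ∧
      leftSpectrum T \ pointSpectrum T ⊆ leftSpectrum (T + K) := by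
  constructor
  · rintro l ⟨hl1, hl2⟩
    by_contra h
    exact not_mem_left_perturb T K hK l h hl2 hl1
  · rintro l ⟨hl1, hl2⟩
    by_contra h
    have hK' : IsCompactOperator ⇑(-K) := by
      have := hK.neg
      simpa using this
    have := not_mem_left_perturb (T + K) (-K) hK' l h
    rw [add_neg_cancel_right] at this
    exact this hl2 hl1
end

section
/- Let T and K be bounded linear operators on a nonzero complex Hilbert space H with K compact. If σ_p(T) = ∅, then σ_l(T+K) = σ_l(T) ∪ σ_p(T+K). -/
open scoped InnerProductSpace
open Filter Topology

section Aux

variable {H : Type*} [NormedAddCommGroup H] [InnerProductSpace ℂ H] [CompleteSpace H]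

/-- From a left inverse we get a lower bound. -/
lemma auxBddBelow_of_leftInv [Nontrivial H] (A L : H →L[ℂ] H) (hL : L ∘L A = 1) :
    ∃ c > 0, ∀ x : H, c * ‖x‖ ≤ ‖A x‖ := by
  have hLA : ∀ x : H, L (A x) = x := fun x => by
    have := congrArg (fun M : H →L[ℂ] H => M x) hL
    simpa using this
  have hLne : L ≠ 0 := by
    obtain ⟨x, hx⟩ := exists_ne (0 : H)
    intro h
    apply hx
    rw [← hLA x, h]
    simp
  have hLpos : 0 < ‖L‖ := norm_pos_iff.mpr hLne
  refine ⟨‖L‖⁻¹, by positivity, fun x => ?_⟩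
  have : ‖x‖ ≤ ‖L‖ * ‖A x‖ := by
    calc ‖x‖ = ‖L (A x)‖ := by rw [hLA]
    _ ≤ ‖L‖ * ‖A x‖ := L.le_opNorm _
  rw [inv_mul_le_iff₀ hLpos] at *
  nlinarith [norm_nonneg (A x)]

/-- Bounded below ⇒ left invertible. -/
lemma auxLeftInv_of_bddBelow (A : H →L[ℂ] H) {c : ℝ} (hc : 0 < c)
    (h : ∀ x : H, c * ‖x‖ ≤ ‖A x‖) : ∃ L : H →L[ℂ] H, L ∘L A = 1 := by
  have hanti : AntilipschitzWith ⟨c⁻¹, by positivity⟩ ⇑A := by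
    apply A.antilipschitz_of_bound
    intro x
    show ‖x‖ ≤ c⁻¹ * ‖A x‖
    calc ‖x‖ = c⁻¹ * (c * ‖x‖) := by field_simp
    _ ≤ c⁻¹ * ‖A x‖ := by
        have := h x
        have h2 : (0:ℝ) < c⁻¹ := inv_pos.mpr hc
        nlinarith
  haveI : CompleteSpace (LinearMap.range (A : H →ₗ[ℂ] H)) := hanti.completeSpace_range_clm
  set R := LinearMap.range (A : H →ₗ[ℂ] H) with hR
  have hmem : ∀ x, A x ∈ R := fun x => LinearMap.mem_range_self _ x
  set A' : H →L[ℂ] R := A.codRestrict R hmem with hA'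
  have hker : LinearMap.ker (A' : H →ₗ[ℂ] R) = ⊥ := by
    rw [hA', ContinuousLinearMap.ker_codRestrict]
    exact LinearMap.ker_eq_bot.mpr hanti.injective
  have hrange : LinearMap.range (A' : H →ₗ[ℂ] R) = ⊤ := by
    rw [LinearMap.range_eq_top]
    rintro ⟨y, x, rfl⟩
    exact ⟨x, rfl⟩
  set e := ContinuousLinearEquiv.ofBijective A' hker hrange with he
  refine ⟨(e.symm : R →L[ℂ] H) ∘L (Submodule.orthogonalProjectionOnto R), ?_⟩
  ext x
  have h1 : Submodule.orthogonalProjectionOnto R (A x) = A' x :=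
    Submodule.orthogonalProjectionOnto_mem_subspace_eq_self (A' x)
  have h2 : e x = A' x := rfl
  simp only [ContinuousLinearMap.comp_apply, ContinuousLinearMap.one_apply,
    ContinuousLinearEquiv.coe_coe, h1, ← h2, e.symm_apply_apply]

/-- Compact perturbation of a bounded-below operator that stays injective is
bounded below. -/
lemma auxPerturb (A B : H →L[ℂ] H) (hC : IsCompactOperator ⇑(B - A))
    (hA : ∃ c > 0, ∀ x : H, c * ‖x‖ ≤ ‖A x‖) (hB : ∀ x : H, B x = 0 → x = 0) :
    ∃ c > 0, ∀ x : H, c * ‖x‖ ≤ ‖B x‖ := by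
  by_contra hcon
  push_neg at hcon
  -- for each n, get a unit vector y n with ‖B (y n)‖ < 1/(n+1)
  have hyn : ∀ n : ℕ, ∃ y : H, ‖y‖ = 1 ∧ ‖B y‖ < 1 / (n + 1) := by
    intro n
    obtain ⟨x, hx⟩ := hcon (1 / (n + 1)) (by positivity)
    have hxne : x ≠ 0 := by
      intro h
      rw [h] at hx
      simp at hx
    have hxpos : 0 < ‖x‖ := norm_pos_iff.mpr hxne
    refine ⟨‖x‖⁻¹ • x, ?_, ?_⟩
    · rw [norm_smul, norm_inv, norm_norm, inv_mul_cancel₀ hxpos.ne']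
    · rw [B.map_smul_of_tower, norm_smul, norm_inv, norm_norm]
      rw [inv_mul_lt_iff₀ hxpos]
      calc ‖B x‖ < 1 / (n + 1) * ‖x‖ := hx
      _ = ‖x‖ * (1 / (n + 1)) := by ring
  choose y hy1 hy2 using hyn
  have hBy0 : Tendsto (fun n => B (y n)) atTop (𝓝 0) := by
    rw [tendsto_zero_iff_norm_tendsto_zero]
    apply squeeze_zero (fun n => norm_nonneg _) (fun n => (hy2 n).le)
    exact tendsto_one_div_add_atTop_nhds_zero_nat
  -- compactness: subsequence where (B - A) (y n) converges
  obtain ⟨Kset, hKc, hKsub⟩ :=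
    IsCompactOperator.image_closedBall_subset_compact (𝕜₁ := ℂ)
      (f := (B - A).toLinearMap) hC 2
  have hmem : ∀ n, (B - A) (y n) ∈ Kset := by
    intro n
    apply hKsub
    refine ⟨y n, ?_, rfl⟩
    rw [Metric.mem_closedBall, dist_zero_right, hy1 n]
    norm_num
  obtain ⟨w, -, φ, hφ, hw⟩ := hKc.tendsto_subseq hmem
  -- A (y (φ n)) converges
  have hAconv : Tendsto (fun n => A (y (φ n))) atTop (𝓝 (0 - w)) := by
    have : (fun n => A (y (φ n))) = fun n => B (y (φ n)) - (B - A) (y (φ n)) := by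
      funext n; simp
    rw [this]
    exact (hBy0.comp hφ.tendsto_atTop).sub hw
  obtain ⟨c, hc, hAb⟩ := hA
  -- y ∘ φ is Cauchy
  have hcauchy : CauchySeq (fun n => y (φ n)) := by
    have hAc : CauchySeq (fun n => A (y (φ n))) := hAconv.cauchySeq
    rw [Metric.cauchySeq_iff] at hAc ⊢
    intro ε hε
    obtain ⟨N, hN⟩ := hAc (c * ε) (by positivity)
    refine ⟨N, fun m hm n hn => ?_⟩
    have h1 := hN m hm n hn
    have h2 : c * ‖y (φ m) - y (φ n)‖ ≤ ‖A (y (φ m)) - A (y (φ n))‖ := by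
      have := hAb (y (φ m) - y (φ n))
      rwa [map_sub] at this
    rw [dist_eq_norm] at h1 ⊢
    nlinarith [norm_nonneg (y (φ m) - y (φ n))]
  obtain ⟨v, hv⟩ := cauchySeq_tendsto_of_complete hcauchy
  have hv1 : ‖v‖ = 1 := by
    have : Tendsto (fun n => ‖y (φ n)‖) atTop (𝓝 ‖v‖) := hv.norm
    have h2 : Tendsto (fun _ : ℕ => (1:ℝ)) atTop (𝓝 ‖v‖) := by
      convert this using 2 with n
      exact (hy1 (φ n)).symm
    exact tendsto_nhds_unique h2 tendsto_const_nhds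
  have hBv : B v = 0 := by
    have h1 : Tendsto (fun n => B (y (φ n))) atTop (𝓝 (B v)) :=
      (B.continuous.tendsto v).comp hv
    have h2 : Tendsto (fun n => B (y (φ n))) atTop (𝓝 0) := hBy0.comp hφ.tendsto_atTop
    exact tendsto_nhds_unique h1 h2
  have := hB v hBv
  rw [this] at hv1
  simp at hv1

end Aux

theorem left_spectrum_compact_perturbation_of_pointSpectrum_empty
    {H : Type*} [NormedAddCommGroup H] [InnerProductSpace ℂ H] [CompleteSpace H]
    [Nontrivial H] (T K : H →L[ℂ] H) (hK : IsCompactOperator ⇑K)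
    (hp : pointSpectrum T = ∅) :
    leftSpectrum (T + K) = leftSpectrum T ∪ pointSpectrum (T + K) := by
  ext l
  have hTinj : ∀ x : H, (T - l • (1 : H →L[ℂ] H)) x = 0 → x = 0 := by
    intro x hx
    by_contra hxne
    have hTx : T x = l • x := by
      have : T x - l • x = 0 := by simpa using hx
      linear_combination (norm := module) this
    have : l ∈ pointSpectrum T := ⟨x, hxne, hTx⟩
    rw [hp] at this
    exact this
  constructor
  · intro hl
    by_contra hcon
    rw [Set.mem_union, not_or] at hcon
    obtain ⟨h1, h2⟩ := hcon
    rw [leftSpectrum, Set.mem_setOf_eq, not_not] at h1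
    obtain ⟨L, hL⟩ := h1
    have hbbT := auxBddBelow_of_leftInv _ L hL
    have hdiff : ((T + K) - l • (1 : H →L[ℂ] H)) - (T - l • (1 : H →L[ℂ] H)) = K := by
      ext x; simp
    have hcomp : IsCompactOperator
        ⇑(((T + K) - l • (1 : H →L[ℂ] H)) - (T - l • (1 : H →L[ℂ] H))) := by
      rw [hdiff]; exact hK
    have hinj : ∀ x : H, ((T + K) - l • (1 : H →L[ℂ] H)) x = 0 → x = 0 := by
      intro x hx
      by_contra hxne
      apply h2
      refine ⟨x, hxne, ?_⟩
      have : (T + K) x - l • x = 0 := by simpa using hx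
      linear_combination (norm := module) this
    obtain ⟨c', hc', hbb'⟩ := auxPerturb _ _ hcomp hbbT hinj
    exact hl (auxLeftInv_of_bddBelow _ hc' hbb')
  · rintro (hl | hl)
    · intro hex
      obtain ⟨L, hL⟩ := hex
      have hbbS := auxBddBelow_of_leftInv _ L hL
      have hdiff : (T - l • (1 : H →L[ℂ] H)) - ((T + K) - l • (1 : H →L[ℂ] H)) = -K := by
        ext x; simp
      have hcomp : IsCompactOperator
          ⇑((T - l • (1 : H →L[ℂ] H)) - ((T + K) - l • (1 : H →L[ℂ] H))) := by
        rw [hdiff]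
        exact hK.neg
      obtain ⟨c', hc', hbb'⟩ := auxPerturb _ _ hcomp hbbS hTinj
      exact hl (auxLeftInv_of_bddBelow _ hc' hbb')
    · obtain ⟨h, hne, hh⟩ := hl
      intro hex
      obtain ⟨L, hL⟩ := hex
      apply hne
      have h0 : ((T + K) - l • (1 : H →L[ℂ] H)) h = 0 := by
        simp [hh]
      calc h = L (((T + K) - l • (1 : H →L[ℂ] H)) h) := by
            have := congrArg (fun M : H →L[ℂ] H => M h) hL
            simpa using this.symm
      _ = L 0 := by rw [h0]
      _ = 0 := by simp
end

section
/- Let T be a bounded linear operator on a nonzero complex Hilbert space H and let f, g ∈ H with T*g = 0. If λ ∈ ℂ satisfies λ ∉ σ_l(T) and λ ≠ ⟨f,g⟩, then λ is not an eigenvalue of T + f⊗g. -/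
open scoped InnerProductSpace

/-!
If `(T + f ⊗ g) h = λ h`, pairing with `g` kills `T h` because `T* g = 0`, leaving
`⟨f, g⟩ ⟨h, g⟩ = λ ⟨h, g⟩`; as `λ ≠ ⟨f, g⟩` this forces `⟨h, g⟩ = 0`. Then `T h = λ h`,
and a left inverse of `T - λ` gives `h = 0`.
-/

section

variable {H : Type*} [NormedAddCommGroup H] [InnerProductSpace ℂ H]

@[simp]
lemma rankOne_apply (f g h : H) : rankOne f g h = ⟪g, h⟫_ℂ • f := rfl

lemma injective_sub_smul_one_of_notMem_leftSpectrum {T : H →L[ℂ] H} {lam : ℂ}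
    (hlam : lam ∉ leftSpectrum T) : Function.Injective (T - lam • (1 : H →L[ℂ] H)) := by
  obtain ⟨L, hL⟩ := not_not.mp hlam
  exact Function.LeftInverse.injective (g := L) fun h ↦ by
    simpa using congrArg (· h) hL

lemma eq_zero_of_apply_eq_smul_of_notMem_leftSpectrum {T : H →L[ℂ] H} {lam : ℂ}
    (hlam : lam ∉ leftSpectrum T) {h : H} (hh : T h = lam • h) : h = 0 :=
  injective_sub_smul_one_of_notMem_leftSpectrum hlam <| by simp [hh]

variable [CompleteSpace H]

lemma inner_apply_eq_zero_of_adjoint_apply_eq_zero {T : H →L[ℂ] H} {g : H}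
    (hg : ContinuousLinearMap.adjoint T g = 0) (h : H) : ⟪g, T h⟫_ℂ = 0 := by
  rw [← ContinuousLinearMap.adjoint_inner_left, hg, inner_zero_left]

lemma inner_eq_zero_of_add_rankOne_apply_eq_smul {T : H →L[ℂ] H} {f g h : H} {lam : ℂ}
    (hg : ContinuousLinearMap.adjoint T g = 0) (hlam : lam ≠ ⟪g, f⟫_ℂ)
    (hh : (T + rankOne f g) h = lam • h) : ⟪g, h⟫_ℂ = 0 := by
  have hpair := congrArg (⟪g, ·⟫_ℂ) hh
  simp only [add_apply, rankOne_apply, inner_add_right, inner_smul_right,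
    inner_apply_eq_zero_of_adjoint_apply_eq_zero hg, zero_add] at hpair
  have : ⟪g, h⟫_ℂ * (lam - ⟪g, f⟫_ℂ) = 0 := by linear_combination -hpair
  exact (mul_eq_zero.mp this).resolve_right (sub_ne_zero.mpr hlam)

end

theorem not_eigenvalue_of_rankOne_perturbation_general
    {H : Type*} [NormedAddCommGroup H] [InnerProductSpace ℂ H] [CompleteSpace H]
    (T : H →L[ℂ] H) (f g : H)
    (hg : ContinuousLinearMap.adjoint T g = 0) (lam : ℂ)
    (hlam : lam ∉ leftSpectrum T) (hlam' : lam ≠ ⟪g, f⟫_ℂ) :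
    lam ∉ pointSpectrum (T + rankOne f g) := by
  rintro ⟨h, hh, heq⟩
  have hgh : ⟪g, h⟫_ℂ = 0 := inner_eq_zero_of_add_rankOne_apply_eq_smul hg hlam' heq
  have hTh : T h = lam • h := by simpa [hgh] using heq
  exact hh (eq_zero_of_apply_eq_smul_of_notMem_leftSpectrum hlam hTh)

theorem not_eigenvalue_of_rankOne_perturbation
    {H : Type*} [NormedAddCommGroup H] [InnerProductSpace ℂ H] [CompleteSpace H]
    [Nontrivial H] (T : H →L[ℂ] H) (f g : H)
    (hg : ContinuousLinearMap.adjoint T g = 0) (lam : ℂ)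
    (hlam : lam ∉ leftSpectrum T) (hlam' : lam ≠ ⟪g, f⟫_ℂ) :
    lam ∉ pointSpectrum (T + rankOne f g) :=
  not_eigenvalue_of_rankOne_perturbation_general T f g hg lam hlam hlam'
end

section
/- Let T be a cyclic analytic left invertible bounded operator on a nonzero complex Hilbert space H, let f ∈ H and let g ∈ ker T*. Then either σ_l(T + f⊗g) = σ_l(T) or σ_l(T + f⊗g) = σ_l(T) ∪ {⟨f,g⟩}. -/
/-!
Write `K = f ⊗ g`. Since `g ∈ ker T*`, `K T = 0`, and `K² = ⟨f, g⟩ K`. Hence for `μ ≠ 0`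
`(1 - μ⁻¹ K)(T - μ) = T + K - μ`, and for `μ ≠ ⟨f, g⟩`
`(1 - (⟨f, g⟩ - μ)⁻¹ K)(T + K - μ) = T - μ`. Each factorization transfers left invertibility
in one direction (at `μ = 0` the left invertibility of `T` is assumed), so `σ_l(T) ⊆ σ_l(T + K) ⊆ σ_l(T) ∪ {⟨f, g⟩}`.
-/

open scoped InnerProductSpace

theorem Set.eq_or_eq_insert_of_subset_of_subset_insert {α : Type*} {s t : Set α} {a : α}
    (hst : s ⊆ t) (hts : t ⊆ insert a s) : t = s ∨ t = insert a s := by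
  by_cases ha : a ∈ t
  · exact Or.inr (hts.antisymm (Set.insert_subset ha hst))
  · exact Or.inl (((Set.subset_insert_iff_of_notMem ha).mp hts).antisymm hst)

section LeftInverse

variable {𝕜 R : Type*} [Field 𝕜] [Ring R] [Algebra 𝕜 R] {a k : R}

theorem one_sub_inv_smul_mul_sub_smul_one (hka : k * a = 0) {μ : 𝕜} (hμ : μ ≠ 0) :
    (1 - μ⁻¹ • k) * (a - μ • 1) = a + k - μ • 1 := by
  rw [sub_mul, one_mul, smul_mul_assoc, mul_sub, hka, mul_smul_comm, mul_one, zero_sub,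
    smul_neg, smul_smul, inv_mul_cancel₀ hμ, one_smul, sub_neg_eq_add]
  abel

theorem one_sub_inv_smul_mul_add_sub_smul_one (hka : k * a = 0) {c μ : 𝕜} (hkk : k * k = c • k)
    (hμ : μ ≠ c) : (1 - (c - μ)⁻¹ • k) * (a + k - μ • 1) = a - μ • 1 := by
  rw [sub_mul, one_mul, smul_mul_assoc, mul_sub, mul_add, hka, hkk, mul_smul_comm, mul_one,
    zero_add, ← sub_smul, smul_smul, inv_mul_cancel₀ (sub_ne_zero.mpr hμ.symm), one_smul]
  abel

theorem exists_leftInverse_sub_smul_one_of_add (hka : k * a = 0) (ha : ∃ L, L * a = 1) {μ : 𝕜}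
    (h : ∃ M, M * (a + k - μ • 1) = 1) : ∃ L, L * (a - μ • 1) = 1 := by
  rcases eq_or_ne μ 0 with rfl | hμ
  · simpa using ha
  · obtain ⟨M, hM⟩ := h
    exact ⟨M * (1 - μ⁻¹ • k), by rw [mul_assoc, one_sub_inv_smul_mul_sub_smul_one hka hμ, hM]⟩

theorem exists_leftInverse_add_sub_smul_one (hka : k * a = 0) {c μ : 𝕜} (hkk : k * k = c • k)
    (hμ : μ ≠ c) (h : ∃ L, L * (a - μ • 1) = 1) : ∃ M, M * (a + k - μ • 1) = 1 := by
  obtain ⟨L, hL⟩ := h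
  exact ⟨L * (1 - (c - μ)⁻¹ • k),
    by rw [mul_assoc, one_sub_inv_smul_mul_add_sub_smul_one hka hkk hμ, hL]⟩

end LeftInverse

section Operator

variable {H : Type*} [NormedAddCommGroup H] [InnerProductSpace ℂ H] {T K : H →L[ℂ] H}

theorem leftSpectrum_subset_leftSpectrum_add (hKT : K * T = 0) (hT : ∃ L, L * T = 1) :
    leftSpectrum T ⊆ leftSpectrum (T + K) :=
  fun _ hμ h ↦ hμ (exists_leftInverse_sub_smul_one_of_add hKT hT h)

theorem leftSpectrum_add_subset_insert (hKT : K * T = 0) {c : ℂ} (hKK : K * K = c • K) :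
    leftSpectrum (T + K) ⊆ insert c (leftSpectrum T) := by
  intro μ hμ
  by_contra! h
  rw [Set.mem_insert_iff, not_or] at h
  exact hμ (exists_leftInverse_add_sub_smul_one hKT hKK h.1 (not_not.mp h.2))

theorem rankOne_mul_self (f g : H) : rankOne f g * rankOne f g = ⟪g, f⟫_ℂ • rankOne f g := by
  ext h
  simp only [rankOne, mul_apply_eq_comp, smul_apply,
    ContinuousLinearMap.smulRight_apply, innerSL_apply_apply, inner_smul_right, mul_smul]
  rw [smul_comm]

theorem rankOne_mul_eq_zero [CompleteSpace H] (f : H) {g : H}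
    (hg : ContinuousLinearMap.adjoint T g = 0) : rankOne f g * T = 0 := by
  ext h
  simp [rankOne, ← ContinuousLinearMap.adjoint_inner_left, hg]

end Operator

theorem left_spectrum_rankOne_perturbation_dichotomy_general
    {H : Type*} [NormedAddCommGroup H] [InnerProductSpace ℂ H] [CompleteSpace H]
    (T : H →L[ℂ] H)
    (hlinv : ∃ L : H →L[ℂ] H, L ∘L T = 1)
    (f g : H) (hg : g ∈ LinearMap.ker (ContinuousLinearMap.adjoint T : H →ₗ[ℂ] H)) :
    leftSpectrum (T + rankOne f g) = leftSpectrum T ∨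
    leftSpectrum (T + rankOne f g) = leftSpectrum T ∪ {⟪g, f⟫_ℂ} := by
  have hKT : rankOne f g * T = 0 := rankOne_mul_eq_zero f hg
  rw [Set.union_singleton]
  exact Set.eq_or_eq_insert_of_subset_of_subset_insert
    (leftSpectrum_subset_leftSpectrum_add hKT hlinv)
    (leftSpectrum_add_subset_insert hKT (rankOne_mul_self f g))

theorem left_spectrum_rankOne_perturbation_dichotomy
    {H : Type*} [NormedAddCommGroup H] [InnerProductSpace ℂ H] [CompleteSpace H]
    [Nontrivial H] (T : H →L[ℂ] H)
    (hcyc : ∃ ξ : H, Dense (Submodule.span ℂ (Set.range fun n : ℕ => (T ^ n) ξ) : Set H))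
    (hana : (⋂ n : ℕ, Set.range ⇑(T ^ n)) = {0})
    (hlinv : ∃ L : H →L[ℂ] H, L ∘L T = 1)
    (f g : H) (hg : g ∈ LinearMap.ker (ContinuousLinearMap.adjoint T : H →ₗ[ℂ] H)) :
    leftSpectrum (T + rankOne f g) = leftSpectrum T ∨
    leftSpectrum (T + rankOne f g) = leftSpectrum T ∪ {⟪g, f⟫_ℂ} :=
  left_spectrum_rankOne_perturbation_dichotomy_general T hlinv f g hg
end

section
/- Let T be a bounded linear operator on a complex Hilbert space H and let f, g ∈ H with T*g = 0. Then for every positive integer n, (T + f⊗g)^n = T^n + ∑_{j=0}^{n−1} ⟨f,g⟩^{n−j−1} (T^j f) ⊗ g. -/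
open scoped InnerProductSpace

/-! If `r * t = 0` and `r * r = c • r`, every word in `t` and `r` containing `r` collapses to a
multiple of some `t ^ j * r`: once an `r` appears, each further factor `t` kills the word and
each further factor `r` only contributes a factor `c`. For `t = T` and `r = f ⊗ g`, the first
relation is `T* g = 0`, the second `(f ⊗ g)² = ⟨f, g⟩ (f ⊗ g)`. -/

theorem add_pow_of_mul_eq_zero_of_mul_self_eq_smul {R A : Type*} [CommSemiring R] [Semiring A]
    [Algebra R A] {t r : A} {c : R} (hrt : r * t = 0) (hrr : r * r = c • r) (n : ℕ) :
    (t + r) ^ n = t ^ n + ∑ j ∈ Finset.range n, c ^ (n - j - 1) • (t ^ j * r) := by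
  induction n with
  | zero => simp
  | succ n ih =>
    have hterm : ∀ j ∈ Finset.range n,
        c ^ (n - j - 1) • (t ^ j * r) * (t + r) = c ^ (n + 1 - j - 1) • (t ^ j * r) := by
      intro j hj
      have hexp : n - j - 1 + 1 = n + 1 - j - 1 := by have := Finset.mem_range.mp hj; omega
      rw [smul_mul_assoc, mul_add, mul_assoc, hrt, mul_assoc, hrr, mul_zero, zero_add,
        mul_smul_comm, smul_smul, ← pow_succ, hexp]
    rw [pow_succ, ih, add_mul, Finset.sum_mul, Finset.sum_congr rfl hterm, mul_add, ← pow_succ,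
      Finset.sum_range_succ, Nat.add_sub_cancel_left, Nat.sub_self, pow_zero, one_smul]
    abel

section RankOne

variable {H : Type*} [NormedAddCommGroup H] [InnerProductSpace ℂ H]

theorem mul_rankOne (T : H →L[ℂ] H) (f g : H) : T * rankOne f g = rankOne (T f) g := by
  ext h
  simp [rankOne]

theorem rankOne_mul_rankOne (a b f g : H) :
    rankOne a b * rankOne f g = ⟪b, f⟫_ℂ • rankOne a g := by
  ext h
  simp [rankOne, smul_smul, mul_comm]

theorem rankOne_mul_eq_zero_of_adjoint_apply_eq_zero [CompleteSpace H] {T : H →L[ℂ] H} (f : H)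
    {g : H} (hg : ContinuousLinearMap.adjoint T g = 0) : rankOne f g * T = 0 := by
  ext h
  simp [rankOne, ← ContinuousLinearMap.adjoint_inner_left, hg]

end RankOne

theorem rankOne_perturbation_pow_general
    {H : Type*} [NormedAddCommGroup H] [InnerProductSpace ℂ H] [CompleteSpace H]
    (T : H →L[ℂ] H) (f g : H) (hg : ContinuousLinearMap.adjoint T g = 0)
    (n : ℕ) :
    (T + rankOne f g) ^ n =
      T ^ n + ∑ j ∈ Finset.range n, ⟪g, f⟫_ℂ ^ (n - j - 1) • rankOne ((T ^ j) f) g := by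
  rw [add_pow_of_mul_eq_zero_of_mul_self_eq_smul
    (rankOne_mul_eq_zero_of_adjoint_apply_eq_zero f hg) (rankOne_mul_rankOne f g f g) n]
  simp only [mul_rankOne]

theorem rankOne_perturbation_pow
    {H : Type*} [NormedAddCommGroup H] [InnerProductSpace ℂ H] [CompleteSpace H]
    (T : H →L[ℂ] H) (f g : H) (hg : ContinuousLinearMap.adjoint T g = 0)
    (n : ℕ) (hn : 0 < n) :
    (T + rankOne f g) ^ n =
      T ^ n + ∑ j ∈ Finset.range n, ⟪g, f⟫_ℂ ^ (n - j - 1) • rankOne ((T ^ j) f) g :=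
  rankOne_perturbation_pow_general T f g hg n
end

section
/- Let r > 0 and let H be a complex Hilbert space of holomorphic functions on the disc D_r = {z ∈ ℂ : |z| < r} containing all complex polynomials, such that a holomorphic function h on D_r belongs to H if and only if zh belongs to H, and such that the operator M_z of multiplication by z is bounded on H. Let f, g ∈ H with M_z* g = 0. If ⟨f,g⟩ = 0, then M_z + f⊗g is analytic, i.e., ⋂_{n≥0} (M_z + f⊗g)^n(H) = {0}. -/
open scoped InnerProductSpace
open Metric Filter Topology

/-- A realization of a complex Hilbert space `H` as a Hilbert space of holomorphic
functions on the disc `D_r = {z : |z| < r}` containing all complex polynomials, such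
that a holomorphic function `h` on `D_r` belongs to `H` iff `z·h` does, and the
operator `M_z` of multiplication by `z` is a bounded operator on `H`. -/
structure HolomorphicHilbertSpaceOn (r : ℝ) (H : Type*) [NormedAddCommGroup H]
    [InnerProductSpace ℂ H] [CompleteSpace H] where
  rpos : 0 < r
  toFun : H →ₗ[ℂ] (ℂ → ℂ)
  holo : ∀ h : H, DifferentiableOn ℂ (toFun h) (Metric.ball (0 : ℂ) r)
  sep : ∀ h₁ h₂ : H, Set.EqOn (toFun h₁) (toFun h₂) (Metric.ball (0 : ℂ) r) → h₁ = h₂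
  Mz : H →L[ℂ] H
  Mz_apply : ∀ h : H, ∀ z ∈ Metric.ball (0 : ℂ) r, toFun (Mz h) z = z * toFun h z
  shift_mem : ∀ φ : ℂ → ℂ, DifferentiableOn ℂ φ (Metric.ball (0 : ℂ) r) →
    ((∃ h : H, Set.EqOn (toFun h) φ (Metric.ball (0 : ℂ) r)) ↔
      (∃ h : H, Set.EqOn (toFun h) (fun z => z * φ z) (Metric.ball (0 : ℂ) r)))
  poly_mem : ∀ p : Polynomial ℂ, ∃ h : H,
    Set.EqOn (toFun h) (fun z => Polynomial.eval z p) (Metric.ball (0 : ℂ) r)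

lemma eqOn_zero_of_all_orders {r : ℝ} (hr : 0 < r) (f : ℂ → ℂ)
    (hf : DifferentiableOn ℂ f (ball (0 : ℂ) r))
    (h : ∀ n : ℕ, ∃ ψ : ℂ → ℂ, DifferentiableOn ℂ ψ (ball (0 : ℂ) r) ∧
      ∀ z ∈ ball (0 : ℂ) r, f z = z ^ n * ψ z) :
    Set.EqOn f 0 (ball (0 : ℂ) r) := by
  have h0mem : (0 : ℂ) ∈ ball (0 : ℂ) r := by simpa using hr
  have hballn : ball (0 : ℂ) r ∈ 𝓝 (0 : ℂ) := isOpen_ball.mem_nhds h0mem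
  have hf' : AnalyticOnNhd ℂ f (ball (0 : ℂ) r) := hf.analyticOnNhd isOpen_ball
  have hfa : AnalyticAt ℂ f 0 := hf' 0 h0mem
  have h0 : ∀ᶠ z in 𝓝 (0 : ℂ), f z = 0 := by
    by_contra hne
    have hord : analyticOrderAt f 0 ≠ ⊤ := fun ht => hne (analyticOrderAt_eq_top.mp ht)
    lift analyticOrderAt f 0 to ℕ using hord with m hm
    obtain ⟨g, hg, hg0, heq⟩ := (hfa.analyticOrderAt_eq_natCast (n := m)).mp hm.symm
    obtain ⟨ψ, hψd, hψeq⟩ := h (m + 1)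
    have key : ∀ᶠ z in 𝓝[≠] (0 : ℂ), g z = z * ψ z := by
      filter_upwards [nhdsWithin_le_nhds heq, nhdsWithin_le_nhds hballn,
        self_mem_nhdsWithin] with z h1 h2 (h3 : z ≠ 0)
      have : z ^ m * g z = z ^ m * (z * ψ z) := by
        have h4 := hψeq z h2
        rw [h1, sub_zero, smul_eq_mul] at h4
        rw [h4, pow_succ, mul_assoc]
      exact mul_left_cancel₀ (pow_ne_zero m h3) this
    have t1 : Filter.Tendsto g (𝓝[≠] (0 : ℂ)) (𝓝 (g 0)) :=
      hg.continuousAt.continuousWithinAt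
    have t2 : Filter.Tendsto (fun z : ℂ => z * ψ z) (𝓝[≠] (0 : ℂ)) (𝓝 (0 * ψ 0)) := by
      have hψc : ContinuousAt ψ 0 := (hψd.continuousOn.continuousAt hballn)
      exact (continuousAt_id.mul hψc).continuousWithinAt
    have : g 0 = 0 * ψ 0 := tendsto_nhds_unique_of_eventuallyEq t1 t2 key
    simp at this
    exact hg0 this
  exact hf'.eqOn_zero_of_preconnected_of_eventuallyEq_zero (convex_ball _ _).isPreconnected
    h0mem h0

theorem analytic_rankOne_perturbation_of_inner_eq_zero
    {r : ℝ} {H : Type*} [NormedAddCommGroup H] [InnerProductSpace ℂ H] [CompleteSpace H]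
    (e : HolomorphicHilbertSpaceOn r H) (f g : H)
    (hg : ContinuousLinearMap.adjoint e.Mz g = 0)
    (hfg : ⟪g, f⟫_ℂ = 0) :
    (⋂ n : ℕ, Set.range ⇑((e.Mz + rankOne f g) ^ n)) = {0} := by
  set T : H →L[ℂ] H := e.Mz + rankOne f g with hT
  have hgMz : ∀ x : H, ⟪g, e.Mz x⟫_ℂ = 0 := fun x => by
    rw [← ContinuousLinearMap.adjoint_inner_left, hg, inner_zero_left]
  have hgT : ∀ x : H, ⟪g, T x⟫_ℂ = 0 := fun x => by
    simp [hT, rankOne, ContinuousLinearMap.add_apply, inner_add_right,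
      inner_smul_right, hgMz x, hfg]
  have hTMz : ∀ x : H, ⟪g, x⟫_ℂ = 0 → T x = e.Mz x := fun x hx => by
    simp [hT, rankOne, ContinuousLinearMap.add_apply, hx]
  have hrange : ∀ n : ℕ, Set.range ⇑(T ^ (n + 1)) ⊆ Set.range ⇑(e.Mz ^ n) := by
    intro n
    induction n with
    | zero => intro x _; exact ⟨x, by simp⟩
    | succ n ih =>
      rintro x ⟨k, rfl⟩
      have h1 : (T ^ (n + 2)) k = T ((T ^ (n + 1)) k) := by rw [pow_succ']; rfl
      have hmem : ⟪g, (T ^ (n + 1)) k⟫_ℂ = 0 := by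
        have : (T ^ (n + 1)) k = T ((T ^ n) k) := by rw [pow_succ']; rfl
        rw [this]; exact hgT _
      obtain ⟨y, hy⟩ := ih ⟨k, rfl⟩
      refine ⟨y, ?_⟩
      rw [pow_succ', ContinuousLinearMap.mul_apply, hy, ← hTMz _ hmem, ← h1]
  apply Set.Subset.antisymm
  · intro x hx
    simp only [Set.mem_iInter] at hx
    have hx' : ∀ n : ℕ, ∃ y : H, (e.Mz ^ n) y = x := fun n => hrange n (hx (n + 1))
    have hfun : ∀ (n : ℕ) (y : H), ∀ z ∈ ball (0 : ℂ) r,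
        e.toFun ((e.Mz ^ n) y) z = z ^ n * e.toFun y z := by
      intro n
      induction n with
      | zero => intro y z _; simp
      | succ n ih =>
        intro y z hz
        have h1 : (e.Mz ^ (n + 1)) y = e.Mz ((e.Mz ^ n) y) := by rw [pow_succ']; rfl
        rw [h1, e.Mz_apply _ z hz, ih y z hz, pow_succ]
        ring
    have hzero : Set.EqOn (e.toFun x) 0 (ball (0 : ℂ) r) := by
      apply eqOn_zero_of_all_orders e.rpos _ (e.holo x)
      intro n
      obtain ⟨y, hy⟩ := hx' n
      exact ⟨e.toFun y, e.holo y, fun z hz => by rw [← hy, hfun n y z hz]⟩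
    have : x = 0 := by
      apply e.sep x 0
      intro z hz
      rw [map_zero]
      exact hzero hz
    simp [this]
  · intro x hx
    simp only [Set.mem_singleton_iff] at hx
    subst hx
    exact Set.mem_iInter.mpr fun n => ⟨0, map_zero _⟩
end

section
/- Let r > 0 and let H be a complex Hilbert space of holomorphic functions on the disc D_r = {z ∈ ℂ : |z| < r} containing all complex polynomials, such that a holomorphic function h on D_r belongs to H if and only if zh belongs to H, and such that the operator M_z of multiplication by z is bounded on H. Let f, g ∈ H with M_z* g = 0, f(0) ≠ 0 and ⟨f,g⟩ ≠ 0. Let h0 be the formal power series ∑_{j=0}^∞ (∑_{i=0}^j f̂(j−i)/⟨f,g⟩^i) z^j, where f̂(n) is the n-th Taylor coefficient of f at 0. Then the hyper-range ⋂_{n≥0} (M_z + f⊗g)^n(H) equals the span of the element of H whose Taylor coefficients at 0 are the coefficients of h0 if such an element of H exists, and equals {0} otherwise. -/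
open Metric Filter


open scoped InnerProductSpace

section AuxAnalytic

lemma iteratedDeriv_congr_nhds {φ ψ : ℂ → ℂ} {x : ℂ} (h : φ =ᶠ[nhds x] ψ) (n : ℕ) :
    iteratedDeriv n φ x = iteratedDeriv n ψ x := by
  have H : ∀ m : ℕ, iteratedDeriv m φ =ᶠ[nhds x] iteratedDeriv m ψ := by
    intro m
    induction m with
    | zero => simpa [iteratedDeriv_zero] using h
    | succ m ih => rw [iteratedDeriv_succ, iteratedDeriv_succ]; exact ih.deriv
  exact (H n).eq_of_nhds

lemma analyticOnNhd_iteratedDeriv {φ : ℂ → ℂ} {s : Set ℂ} (hφ : AnalyticOnNhd ℂ φ s) (n : ℕ) :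
    AnalyticOnNhd ℂ (iteratedDeriv n φ) s := by
  induction n with
  | zero => simpa [iteratedDeriv_zero] using hφ
  | succ n ih => rw [iteratedDeriv_succ]; exact ih.deriv

lemma iteratedDeriv_add_apply' {φ ψ : ℂ → ℂ} {s : Set ℂ} (hs : IsOpen s)
    (hφ : AnalyticOnNhd ℂ φ s) (hψ : AnalyticOnNhd ℂ ψ s) (n : ℕ) :
    ∀ x ∈ s, iteratedDeriv n (fun z => φ z + ψ z) x = iteratedDeriv n φ x + iteratedDeriv n ψ x := by
  induction n with
  | zero => intro x _; simp [iteratedDeriv_zero]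
  | succ n ih =>
    intro x hx
    have h1 : iteratedDeriv n (fun z => φ z + ψ z) =ᶠ[nhds x]
        fun y => iteratedDeriv n φ y + iteratedDeriv n ψ y :=
      eventually_of_mem (hs.mem_nhds hx) ih
    rw [iteratedDeriv_succ, h1.deriv_eq,
      deriv_fun_add ((analyticOnNhd_iteratedDeriv hφ n x hx).differentiableAt)
        ((analyticOnNhd_iteratedDeriv hψ n x hx).differentiableAt),
      ← iteratedDeriv_succ, ← iteratedDeriv_succ]

lemma iteratedDeriv_const_mul_apply' {φ : ℂ → ℂ} {s : Set ℂ} (hs : IsOpen s)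
    (hφ : AnalyticOnNhd ℂ φ s) (a : ℂ) (n : ℕ) :
    ∀ x ∈ s, iteratedDeriv n (fun z => a * φ z) x = a * iteratedDeriv n φ x := by
  induction n with
  | zero => intro x _; simp [iteratedDeriv_zero]
  | succ n ih =>
    intro x hx
    have h1 : iteratedDeriv n (fun z => a * φ z) =ᶠ[nhds x]
        fun y => a * iteratedDeriv n φ y := eventually_of_mem (hs.mem_nhds hx) ih
    rw [iteratedDeriv_succ, h1.deriv_eq,
      deriv_const_mul a ((analyticOnNhd_iteratedDeriv hφ n x hx).differentiableAt),
      ← iteratedDeriv_succ]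

lemma iteratedDeriv_id_mul_apply' {φ : ℂ → ℂ} {s : Set ℂ} (hs : IsOpen s)
    (hφ : AnalyticOnNhd ℂ φ s) (n : ℕ) :
    ∀ x ∈ s, iteratedDeriv (n + 1) (fun z => z * φ z) x =
      ((n : ℂ) + 1) * iteratedDeriv n φ x + x * iteratedDeriv (n + 1) φ x := by
  induction n with
  | zero =>
    intro x hx
    rw [iteratedDeriv_one, deriv_fun_mul differentiableAt_fun_id ((hφ x hx).differentiableAt)]
    simp [iteratedDeriv_zero, iteratedDeriv_one]
  | succ n ih =>
    intro x hx
    have h1 : iteratedDeriv (n + 1) (fun z => z * φ z) =ᶠ[nhds x]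
        fun y => ((n : ℂ) + 1) * iteratedDeriv n φ y + y * iteratedDeriv (n + 1) φ y :=
      eventually_of_mem (hs.mem_nhds hx) ih
    rw [iteratedDeriv_succ, h1.deriv_eq]
    have d1 : DifferentiableAt ℂ (fun y => ((n : ℂ) + 1) * iteratedDeriv n φ y) x :=
      ((analyticOnNhd_iteratedDeriv hφ n x hx).differentiableAt).const_mul _
    have d2 : DifferentiableAt ℂ (fun y => y * iteratedDeriv (n + 1) φ y) x :=
      differentiableAt_fun_id.mul ((analyticOnNhd_iteratedDeriv hφ (n + 1) x hx).differentiableAt)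
    rw [deriv_fun_add d1 d2,
      deriv_const_mul _ ((analyticOnNhd_iteratedDeriv hφ n x hx).differentiableAt),
      deriv_fun_mul differentiableAt_fun_id ((analyticOnNhd_iteratedDeriv hφ (n + 1) x hx).differentiableAt)]
    simp only [deriv_id'', one_mul, ← iteratedDeriv_succ]
    push_cast
    ring

end AuxAnalytic

section Aux2

variable {r : ℝ} {H : Type*} [NormedAddCommGroup H] [InnerProductSpace ℂ H] [CompleteSpace H]
variable (e : HolomorphicHilbertSpaceOn r H)

/-- shorthand -/
noncomputable def coeffH (u : H) (n : ℕ) : ℂ := taylorCoeff (e.toFun u) n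

lemma ball_mem_nhds0 {r : ℝ} (hr : 0 < r) : Metric.ball (0 : ℂ) r ∈ nhds (0 : ℂ) :=
  isOpen_ball.mem_nhds (mem_ball_self hr)

lemma analyticH (u : H) : AnalyticOnNhd ℂ (e.toFun u) (Metric.ball (0 : ℂ) r) :=
  (e.holo u).analyticOnNhd isOpen_ball

lemma coeffH_congr (u : H) (φ : ℂ → ℂ)
    (h : Set.EqOn (e.toFun u) φ (Metric.ball (0 : ℂ) r)) (n : ℕ) :
    coeffH e u n = taylorCoeff φ n := by
  unfold coeffH taylorCoeff
  rw [iteratedDeriv_congr_nhds (eventually_of_mem (ball_mem_nhds0 e.rpos) h) n]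

lemma coeffH_zero_eval (u : H) : coeffH e u 0 = e.toFun u 0 := by
  simp [coeffH, taylorCoeff, iteratedDeriv_zero]

lemma coeffH_ext (u v : H) (h : ∀ n, coeffH e u n = coeffH e v n) : u = v := by
  apply e.sep
  intro z hz
  have hu := Complex.taylorSeries_eq_on_ball' hz (e.holo u)
  have hv := Complex.taylorSeries_eq_on_ball' hz (e.holo v)
  rw [← hu, ← hv]
  congr 1
  funext n
  have hn : iteratedDeriv n (e.toFun u) 0 = iteratedDeriv n (e.toFun v) 0 := by
    have h' := h n
    unfold coeffH taylorCoeff at h'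
    have hfac : ((n.factorial : ℂ)) ≠ 0 := Nat.cast_ne_zero.mpr n.factorial_ne_zero
    field_simp at h'
    exact h'
  rw [hn]

lemma coeffH_add (u v : H) (n : ℕ) : coeffH e (u + v) n = coeffH e u n + coeffH e v n := by
  have h1 : e.toFun (u + v) = fun z => e.toFun u z + e.toFun v z := by
    rw [map_add]; rfl
  unfold coeffH taylorCoeff
  rw [h1, iteratedDeriv_add_apply' isOpen_ball (analyticH e u) (analyticH e v) n 0
    (mem_ball_self e.rpos), add_div]

lemma coeffH_smul (a : ℂ) (u : H) (n : ℕ) : coeffH e (a • u) n = a * coeffH e u n := by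
  have h1 : e.toFun (a • u) = fun z => a * e.toFun u z := by
    rw [map_smul]; rfl
  unfold coeffH taylorCoeff
  rw [h1, iteratedDeriv_const_mul_apply' isOpen_ball (analyticH e u) a n 0
    (mem_ball_self e.rpos), mul_div_assoc]

lemma coeffH_zero_elem (n : ℕ) : coeffH e (0 : H) n = 0 := by
  have := coeffH_add e 0 0 n
  rw [add_zero] at this
  linear_combination -this

lemma coeffH_Mz (u : H) (n : ℕ) :
    coeffH e (e.Mz u) n = if n = 0 then 0 else coeffH e u (n - 1) := by
  rw [coeffH_congr e (e.Mz u) (fun z => z * e.toFun u z) (fun z hz => e.Mz_apply u z hz) n]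
  cases n with
  | zero => simp [taylorCoeff, iteratedDeriv_zero]
  | succ m =>
    unfold coeffH taylorCoeff
    rw [iteratedDeriv_id_mul_apply' isOpen_ball (analyticH e u) m 0 (mem_ball_self e.rpos)]
    have hfac : ((m.factorial : ℂ)) ≠ 0 := Nat.cast_ne_zero.mpr m.factorial_ne_zero
    have hm1 : ((m : ℂ) + 1) ≠ 0 := Nat.cast_add_one_ne_zero m
    simp only [Nat.add_sub_cancel, zero_mul, add_zero, Nat.factorial_succ, if_neg (Nat.succ_ne_zero m)]
    push_cast
    field_simp

end Aux2

section Aux3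

variable {r : ℝ} {H : Type*} [NormedAddCommGroup H] [InnerProductSpace ℂ H] [CompleteSpace H]

lemma inner_structure (e : HolomorphicHilbertSpaceOn r H) (g : H)
    (hg : ContinuousLinearMap.adjoint e.Mz g = 0) :
    ∃ c : ℂ, ∀ u : H, ⟪g, u⟫_ℂ = e.toFun u 0 * c := by
  obtain ⟨one, hone⟩ := e.poly_mem (Polynomial.C 1)
  have hone' : ∀ z ∈ Metric.ball (0:ℂ) r, e.toFun one z = 1 := fun z hz => by
    simpa using hone hz
  refine ⟨⟪g, one⟫_ℂ, fun u => ?_⟩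
  set u' := u - (e.toFun u 0) • one with hu'
  have hu'fun : ∀ z ∈ Metric.ball (0:ℂ) r, e.toFun u' z = e.toFun u z - e.toFun u 0 := by
    intro z hz
    rw [hu', map_sub, map_smul]
    simp [hone' z hz]
  have hu'0 : e.toFun u' 0 = 0 := by
    rw [hu'fun 0 (mem_ball_self e.rpos)]; ring
  set ψ := dslope (e.toFun u') 0 with hψ
  have hψd : DifferentiableOn ℂ ψ (Metric.ball 0 r) := by
    intro z hz
    rcases eq_or_ne z 0 with rfl | hz0
    · obtain ⟨p, hp⟩ := analyticH e u' 0 (mem_ball_self e.rpos)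
      exact (hp.has_fpower_series_dslope_fslope.analyticAt).differentiableAt.differentiableWithinAt
    · have hmem : ({w : ℂ | w ≠ 0} ∩ Metric.ball 0 r) ∈ nhds z :=
        ((isOpen_ne).inter isOpen_ball).mem_nhds ⟨hz0, hz⟩
      have heq : (fun w => (e.toFun u' w - e.toFun u' 0) / (w - 0)) =ᶠ[nhds z] ψ :=
        eventually_of_mem hmem (fun w hw => by
          rw [hψ, dslope_of_ne _ hw.1, slope_def_field])
      have hd : DifferentiableAt ℂ (fun w => (e.toFun u' w - e.toFun u' 0) / (w - 0)) z := by
        apply DifferentiableAt.div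
        · exact ((e.holo u').differentiableAt (isOpen_ball.mem_nhds hz)).sub_const _
        · exact differentiableAt_fun_id.sub_const _
        · simpa using hz0
      exact (hd.congr_of_eventuallyEq heq.symm).differentiableWithinAt
  have hzψ : Set.EqOn (e.toFun u') (fun z => z * ψ z) (Metric.ball 0 r) := by
    intro z hz
    rcases eq_or_ne z 0 with rfl | hz0
    · simp [hu'0]
    · show e.toFun u' z = z * ψ z
      rw [hψ, dslope_of_ne _ hz0, slope_def_field, hu'0]
      field_simp
      ring
  obtain ⟨φ, hφ⟩ := (e.shift_mem ψ hψd).2 ⟨u', hzψ⟩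
  have hMzφ : e.Mz φ = u' := by
    apply e.sep
    intro z hz
    rw [e.Mz_apply φ z hz, hφ hz]
    exact (hzψ hz).symm
  have h0 : ⟪g, u'⟫_ℂ = 0 := by
    rw [← hMzφ, ← ContinuousLinearMap.adjoint_inner_left, hg, inner_zero_left]
  have hu : u = u' + (e.toFun u 0) • one := by rw [hu']; abel
  have hfin : ⟪g, u⟫_ℂ = ⟪g, u' + (e.toFun u 0) • one⟫_ℂ := by rw [← hu]
  rw [hfin, inner_add_right, h0, inner_smul_right, zero_add]

end Aux3

noncomputable def sC {r : ℝ} {H : Type*} [NormedAddCommGroup H] [InnerProductSpace ℂ H]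
    [CompleteSpace H] (e : HolomorphicHilbertSpaceOn r H) (f g : H) (j : ℕ) : ℂ :=
  ∑ i ∈ Finset.range (j + 1), taylorCoeff (e.toFun f) (j - i) / (⟪g, f⟫_ℂ) ^ i


theorem hyperRange_rankOne_perturbation
    {r : ℝ} {H : Type*} [NormedAddCommGroup H] [InnerProductSpace ℂ H] [CompleteSpace H]
    (e : HolomorphicHilbertSpaceOn r H) (f g : H)
    (hg : ContinuousLinearMap.adjoint e.Mz g = 0)
    (hf0 : e.toFun f 0 ≠ 0) (hfg : ⟪g, f⟫_ℂ ≠ 0) :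
    (∀ h0 : H,
      (∀ j : ℕ, taylorCoeff (e.toFun h0) j =
        ∑ i ∈ Finset.range (j + 1), taylorCoeff (e.toFun f) (j - i) / ⟪g, f⟫_ℂ ^ i) →
      (⋂ n : ℕ, Set.range ⇑((e.Mz + rankOne f g) ^ n)) =
        (Submodule.span ℂ ({h0} : Set H) : Set H)) ∧
    ((¬ ∃ h0 : H, ∀ j : ℕ, taylorCoeff (e.toFun h0) j =
        ∑ i ∈ Finset.range (j + 1), taylorCoeff (e.toFun f) (j - i) / ⟪g, f⟫_ℂ ^ i) →
      (⋂ n : ℕ, Set.range ⇑((e.Mz + rankOne f g) ^ n)) = {0}) := by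
  classical
  set T := e.Mz + rankOne f g with hT
  set lam := (⟪g, f⟫_ℂ) with hlam
  have hlamne : lam ≠ 0 := hfg
  obtain ⟨c, hc⟩ := inner_structure e g hg
  have hcf : lam = e.toFun f 0 * c := hc f
  have hcval : c = lam / e.toFun f 0 := by
    rw [hcf, mul_div_cancel_left₀ _ hf0]
  -- basic facts about sC
  have hs0 : sC e f g 0 = e.toFun f 0 := by
    simp [sC, taylorCoeff, iteratedDeriv_zero]
  have hssucc : ∀ j : ℕ, sC e f g (j + 1) = coeffH e f (j + 1) + sC e f g j / lam := by
    intro j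
    have hA : ∀ i : ℕ, taylorCoeff (e.toFun f) (j + 1 - (i + 1)) / lam ^ (i + 1)
        = taylorCoeff (e.toFun f) (j - i) / lam ^ i / lam := by
      intro i
      have h1 : j + 1 - (i + 1) = j - i := by omega
      rw [h1, pow_succ, div_div]
    show (∑ i ∈ Finset.range (j + 1 + 1), taylorCoeff (e.toFun f) (j + 1 - i) / lam ^ i) = _
    rw [Finset.sum_range_succ']
    simp only [hA, Nat.sub_zero, pow_zero, div_one]
    rw [← Finset.sum_div, add_comm]
    rfl
  -- action of T on coefficients
  have T_apply : ∀ u : H, T u = e.Mz u + (⟪g, u⟫_ℂ) • f := by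
    intro u
    rw [hT]
    simp [rankOne, ContinuousLinearMap.add_apply]
  have coeff_T : ∀ (u : H) (n : ℕ), coeffH e (T u) n =
      (if n = 0 then 0 else coeffH e u (n - 1)) + (e.toFun u 0 * c) * coeffH e f n := by
    intro u n
    rw [T_apply u, coeffH_add, coeffH_Mz, coeffH_smul, hc u]
  have coeffT0 : ∀ u : H, coeffH e (T u) 0 = e.toFun u 0 * lam := by
    intro u
    rw [coeff_T, if_pos rfl, zero_add, coeffH_zero_eval, hcf]
    ring
  -- injectivity of T
  have Tker : ∀ u : H, T u = 0 → u = 0 := by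
    intro u hu
    have hcoeff0 : ∀ n, coeffH e (T u) n = 0 := by
      intro n; rw [hu]; exact coeffH_zero_elem e n
    have hu0 : e.toFun u 0 = 0 := by
      have h := hcoeff0 0
      rw [coeffT0 u] at h
      exact (mul_eq_zero.mp h).resolve_right hlamne
    have hall : ∀ n, coeffH e u n = 0 := by
      intro n
      have h := hcoeff0 (n + 1)
      rw [coeff_T] at h
      simpa [hu0] using h
    exact coeffH_ext e u 0 (fun n => by rw [hall n, coeffH_zero_elem])
  have Tinj : Function.Injective ⇑T := by
    intro a b hab
    have h1 : T (a - b) = 0 := by rw [map_sub, hab, sub_self]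
    exact sub_eq_zero.mp (Tker _ h1)
  -- chains in the hyperrange
  have chain : ∀ k : H, (∀ n : ℕ, ∃ x, (T ^ n) x = k) →
      ∃ h : H, (∀ n : ℕ, ∃ x, (T ^ n) x = h) ∧ T h = k := by
    intro k hk
    obtain ⟨h, hh⟩ := hk 1
    rw [pow_one] at hh
    refine ⟨h, fun n => ?_, hh⟩
    obtain ⟨x, hx⟩ := hk (n + 1)
    refine ⟨x, Tinj ?_⟩
    show T ((T ^ n) x) = T h
    rw [hh, ← hx, pow_succ']
    rfl
  -- master coefficient formula on the hyperrange
  have master : ∀ j : ℕ, ∀ k : H, (∀ n : ℕ, ∃ x, (T ^ n) x = k) →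
      coeffH e k j = coeffH e k 0 / e.toFun f 0 * sC e f g j := by
    intro j
    induction j with
    | zero =>
      intro k _
      rw [hs0, div_mul_cancel₀ _ hf0]
    | succ j ih =>
      intro k hk
      obtain ⟨h, hh, hTh⟩ := chain k hk
      have e0 : coeffH e k 0 = e.toFun h 0 * lam := by rw [← hTh, coeffT0]
      have e1 : coeffH e k (j + 1) = coeffH e h j + (e.toFun h 0 * c) * coeffH e f (j + 1) := by
        rw [← hTh, coeff_T]
        simp
      have ihh := ih h hh
      rw [coeffH_zero_eval] at ihh
      rw [e1, ihh, e0, hssucc j, hcval]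
      field_simp
      ring
  refine ⟨?_, ?_⟩
  · -- case 1 : h0 exists
    intro h0 hyp
    have hyp' : ∀ j, coeffH e h0 j = sC e f g j := hyp
    have hh00 : e.toFun h0 0 = e.toFun f 0 := by
      rw [← coeffH_zero_eval, hyp' 0, hs0]
    have heig : T h0 = lam • h0 := by
      apply coeffH_ext
      intro n
      rw [coeff_T, coeffH_smul]
      cases n with
      | zero =>
        rw [if_pos rfl, zero_add, hyp' 0, hs0, coeffH_zero_eval, hh00, hcf]
        try ring
      | succ n =>
        rw [if_neg (Nat.succ_ne_zero n), Nat.add_sub_cancel, hyp' n, hyp' (n + 1),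
          hssucc n, hh00, hcval]
        field_simp
        ring
    have Tpow : ∀ n : ℕ, (T ^ n) h0 = lam ^ n • h0 := by
      intro n
      induction n with
      | zero => simp
      | succ n ih =>
        rw [pow_succ']
        show T ((T ^ n) h0) = lam ^ (n + 1) • h0
        rw [ih, map_smul, heig, smul_smul, ← pow_succ]
    ext k
    simp only [Set.mem_iInter, Set.mem_range, SetLike.mem_coe]
    constructor
    · intro hk
      have hkh : k = (coeffH e k 0 / e.toFun f 0) • h0 := by
        apply coeffH_ext
        intro n
        rw [coeffH_smul, hyp' n, master n k hk]
      rw [hkh]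
      exact Submodule.smul_mem _ _ (Submodule.mem_span_singleton_self h0)
    · intro hk n
      obtain ⟨a, ha⟩ := Submodule.mem_span_singleton.mp hk
      refine ⟨(a / lam ^ n) • h0, ?_⟩
      rw [map_smul, Tpow n, smul_smul, div_mul_cancel₀ _ (pow_ne_zero n hlamne), ha]
  · -- case 2 : no h0
    intro hne
    ext k
    simp only [Set.mem_iInter, Set.mem_range, Set.mem_singleton_iff]
    constructor
    · intro hk
      by_cases hk0 : coeffH e k 0 = 0
      · apply coeffH_ext
        intro n
        rw [master n k hk, hk0, coeffH_zero_elem]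
        simp
      · exfalso
        apply hne
        refine ⟨(e.toFun f 0 / coeffH e k 0) • k, fun j => ?_⟩
        show coeffH e ((e.toFun f 0 / coeffH e k 0) • k) j = sC e f g j
        rw [coeffH_smul, master j k hk]
        field_simp
    · rintro rfl n
      exact ⟨0, map_zero _⟩
end

section
/- Let H be a functional Hilbert space of holomorphic functions on the open unit disc and let f ∈ H be (the restriction to the disc of) a complex polynomial. Then M_z + f⊗1 is analytic if and only if exactly one of the following holds: (i) f(0) = 0; (ii) f(0) ≠ 0, f(f(0)) ≠ 0, and there is no element h of H whose Taylor coefficients at 0 are given by ĥ(j) = 1/f(0)^{j+1} for all j ≥ 0 (i.e., the power series expansion of 1/(f(0)−z) does not belong to H). -/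
open scoped InnerProductSpace

namespace AuxFHS

open Metric Set Polynomial Filter

lemma iteratedDeriv_congr_of_eqOn {φ ψ : ℂ → ℂ} {U : Set ℂ} (hU : IsOpen U)
    (h : Set.EqOn φ ψ U) (n : ℕ) : Set.EqOn (iteratedDeriv n φ) (iteratedDeriv n ψ) U := by
  induction n with
  | zero => simpa using h
  | succ n ih =>
    intro z hz
    rw [iteratedDeriv_succ, iteratedDeriv_succ]
    exact Filter.EventuallyEq.deriv_eq (Filter.eventuallyEq_of_mem (hU.mem_nhds hz) ih)

lemma taylorCoeff_congr {φ ψ : ℂ → ℂ} {U : Set ℂ} (hU : IsOpen U) (h0 : (0:ℂ) ∈ U)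
    (h : Set.EqOn φ ψ U) (n : ℕ) : taylorCoeff φ n = taylorCoeff ψ n := by
  unfold taylorCoeff
  rw [iteratedDeriv_congr_of_eqOn hU h n h0]

lemma iteratedDeriv_add_of_analytic {φ ψ : ℂ → ℂ} {U : Set ℂ} (hU : IsOpen U)
    (hφ : AnalyticOnNhd ℂ φ U) (hψ : AnalyticOnNhd ℂ ψ U) (n : ℕ) :
    Set.EqOn (iteratedDeriv n (fun z => φ z + ψ z))
      (fun z => iteratedDeriv n φ z + iteratedDeriv n ψ z) U := by
  induction n generalizing φ ψ with
  | zero => intro z hz; simp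
  | succ n ih =>
    intro z hz
    have hder : Set.EqOn (deriv (fun z => φ z + ψ z)) (fun z => deriv φ z + deriv ψ z) U :=
      fun w hw => deriv_add ((hφ w hw).differentiableAt) ((hψ w hw).differentiableAt)
    rw [iteratedDeriv_succ', iteratedDeriv_succ', iteratedDeriv_succ']
    calc iteratedDeriv n (deriv (fun z => φ z + ψ z)) z
        = iteratedDeriv n (fun z => deriv φ z + deriv ψ z) z :=
          iteratedDeriv_congr_of_eqOn hU hder n hz
      _ = _ := ih (hφ.deriv_of_isOpen hU) (hψ.deriv_of_isOpen hU) hz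

lemma iteratedDeriv_const_mul_of_analytic {φ : ℂ → ℂ} {U : Set ℂ} (hU : IsOpen U) (a : ℂ)
    (hφ : AnalyticOnNhd ℂ φ U) (n : ℕ) :
    Set.EqOn (iteratedDeriv n (fun z => a * φ z)) (fun z => a * iteratedDeriv n φ z) U := by
  induction n generalizing φ with
  | zero => intro z hz; simp
  | succ n ih =>
    intro z hz
    have hder : Set.EqOn (deriv (fun z => a * φ z)) (fun z => a * deriv φ z) U :=
      fun w hw => by
        rw [deriv_const_mul a ((hφ w hw).differentiableAt)]
    show iteratedDeriv (n+1) (fun z => a * φ z) z = a * iteratedDeriv (n+1) φ z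
    rw [iteratedDeriv_succ', iteratedDeriv_succ']
    calc iteratedDeriv n (deriv (fun z => a * φ z)) z
        = iteratedDeriv n (fun z => a * deriv φ z) z :=
          iteratedDeriv_congr_of_eqOn hU hder n hz
      _ = a * iteratedDeriv n (deriv φ) z := ih (hφ.deriv_of_isOpen hU) hz

lemma iteratedDeriv_X_mul {φ : ℂ → ℂ} {U : Set ℂ} (hU : IsOpen U) (h0 : (0:ℂ) ∈ U)
    (hφ : AnalyticOnNhd ℂ φ U) (m : ℕ) :
    iteratedDeriv (m+1) (fun z => z * φ z) 0 = (m+1 : ℂ) * iteratedDeriv m φ 0 := by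
  induction m generalizing φ with
  | zero =>
    rw [iteratedDeriv_one]
    rw [deriv_fun_mul differentiableAt_fun_id ((hφ 0 h0).differentiableAt)]
    simp
  | succ m ih =>
    have hder : Set.EqOn (deriv (fun z => z * φ z)) (fun z => φ z + z * deriv φ z) U :=
      fun w hw => by
        rw [deriv_fun_mul differentiableAt_fun_id ((hφ w hw).differentiableAt)]
        simp
    have hφ' : AnalyticOnNhd ℂ (deriv φ) U := hφ.deriv_of_isOpen hU
    have hzφ' : AnalyticOnNhd ℂ (fun z => z * deriv φ z) U := analyticOnNhd_id.mul hφ'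
    calc iteratedDeriv (m+2) (fun z => z * φ z) 0
        = iteratedDeriv (m+1) (deriv (fun z => z * φ z)) 0 := by rw [iteratedDeriv_succ']
      _ = iteratedDeriv (m+1) (fun z => φ z + z * deriv φ z) 0 :=
          iteratedDeriv_congr_of_eqOn hU hder (m+1) h0
      _ = iteratedDeriv (m+1) φ 0 + iteratedDeriv (m+1) (fun z => z * deriv φ z) 0 :=
          iteratedDeriv_add_of_analytic hU hφ hzφ' (m+1) h0
      _ = iteratedDeriv (m+1) φ 0 + (m+1 : ℂ) * iteratedDeriv m (deriv φ) 0 := by rw [ih hφ']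
      _ = iteratedDeriv (m+1) φ 0 + (m+1 : ℂ) * iteratedDeriv (m+1) φ 0 := by
          rw [← iteratedDeriv_succ']
      _ = (↑(m + 1) + 1) * iteratedDeriv (m+1) φ 0 := by push_cast; ring

lemma iteratedDeriv_pow_mul {φ : ℂ → ℂ} {U : Set ℂ} (hU : IsOpen U) (h0 : (0:ℂ) ∈ U)
    (hφ : AnalyticOnNhd ℂ φ U) {m n : ℕ} (hmn : m < n) :
    iteratedDeriv m (fun z => z ^ n * φ z) 0 = 0 := by
  induction n generalizing φ m with
  | zero => omega
  | succ n ih =>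
    have hfe : (fun z => z ^ (n+1) * φ z) = (fun z => z * (z ^ n * φ z)) := by
      funext z; ring
    rw [hfe]
    have hψ : AnalyticOnNhd ℂ (fun z => z ^ n * φ z) U :=
      (analyticOnNhd_id.pow n).mul hφ
    match m with
    | 0 => simp
    | (m+1) =>
      rw [iteratedDeriv_X_mul hU h0 hψ m, ih hφ (by omega)]
      ring


lemma taylorCoeff_eq_coeff {φ : ℂ → ℂ} {P : FormalMultilinearSeries ℂ ℂ ℂ}
    (hP : HasFPowerSeriesAt φ P 0) (n : ℕ) : taylorCoeff φ n = P.coeff n := by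
  obtain ⟨r, hr⟩ := hP
  have h := hr.factorial_smul (1:ℂ) n
  unfold taylorCoeff
  rw [iteratedDeriv_eq_iteratedFDeriv, ← h]
  have : P n (fun _ => (1:ℂ)) = P.coeff n := rfl
  rw [this, nsmul_eq_mul]
  field_simp [Nat.factorial_ne_zero]

lemma eqOn_of_taylorCoeff_eq {φ ψ : ℂ → ℂ}
    (hφ : DifferentiableOn ℂ φ (Metric.ball (0:ℂ) 1))
    (hψ : DifferentiableOn ℂ ψ (Metric.ball (0:ℂ) 1))
    (h : ∀ n, taylorCoeff φ n = taylorCoeff ψ n) :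
    Set.EqOn φ ψ (Metric.ball (0:ℂ) 1) := by
  have h0 : (0:ℂ) ∈ Metric.ball (0:ℂ) 1 := Metric.mem_ball_self one_pos
  have hφa := hφ.analyticOnNhd Metric.isOpen_ball
  have hψa := hψ.analyticOnNhd Metric.isOpen_ball
  obtain ⟨P, hP⟩ := hφa 0 h0
  obtain ⟨Q, hQ⟩ := hψa 0 h0
  have hPQ : P = Q := by
    funext n
    rw [← FormalMultilinearSeries.mkPiRing_coeff_eq P,
      ← FormalMultilinearSeries.mkPiRing_coeff_eq Q,
      ← taylorCoeff_eq_coeff hP, ← taylorCoeff_eq_coeff hQ, h n]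
  have hsub : HasFPowerSeriesAt (φ - ψ) (0 : FormalMultilinearSeries ℂ ℂ ℂ) 0 := by
    have := hP.sub hQ
    rwa [hPQ, sub_self] at this
  have hev : φ =ᶠ[nhds (0:ℂ)] ψ := by
    filter_upwards [hsub.eventually_eq_zero] with z hz
    have hz' : φ z - ψ z = 0 := hz
    exact sub_eq_zero.mp hz' 
  exact hφa.eqOn_of_preconnected_of_eventuallyEq hψa
    (convex_ball (0:ℂ) 1).isPreconnected h0 hev

lemma iteratedDeriv_polyeval (q : Polynomial ℂ) (n : ℕ) :
    iteratedDeriv n (fun z => q.eval z) 0 = (n.factorial : ℂ) * q.coeff n := by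
  have key : ∀ (n : ℕ) (q : Polynomial ℂ),
      iteratedDeriv n (fun z => q.eval z) = fun z => (Polynomial.derivative^[n] q).eval z := by
    intro n
    induction n with
    | zero => intro q; simp
    | succ n ih =>
      intro q
      rw [iteratedDeriv_succ']
      have hder : deriv (fun z => q.eval z) = fun z => q.derivative.eval z :=
        funext fun z => Polynomial.deriv (p := q)
      rw [hder, ih q.derivative, Function.iterate_succ_apply]
  rw [key n q]
  show Polynomial.eval 0 ((⇑Polynomial.derivative)^[n] q) = _
  rw [← Polynomial.coeff_zero_eq_eval_zero, Polynomial.coeff_iterate_derivative,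
    zero_add, Nat.descFactorial_self, nsmul_eq_mul]

lemma taylorCoeff_polyeval (q : Polynomial ℂ) (n : ℕ) :
    taylorCoeff (fun z => q.eval z) n = q.coeff n := by
  unfold taylorCoeff
  rw [iteratedDeriv_polyeval]
  field_simp [Nat.factorial_ne_zero]

lemma taylorCoeff_add {φ ψ : ℂ → ℂ}
    (hφ : AnalyticOnNhd ℂ φ (Metric.ball (0:ℂ) 1))
    (hψ : AnalyticOnNhd ℂ ψ (Metric.ball (0:ℂ) 1)) (n : ℕ) :
    taylorCoeff (fun z => φ z + ψ z) n = taylorCoeff φ n + taylorCoeff ψ n := by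
  unfold taylorCoeff
  rw [iteratedDeriv_add_of_analytic Metric.isOpen_ball hφ hψ n (Metric.mem_ball_self one_pos)]
  ring

lemma taylorCoeff_const_mul {φ : ℂ → ℂ} (a : ℂ)
    (hφ : AnalyticOnNhd ℂ φ (Metric.ball (0:ℂ) 1)) (n : ℕ) :
    taylorCoeff (fun z => a * φ z) n = a * taylorCoeff φ n := by
  unfold taylorCoeff
  rw [iteratedDeriv_const_mul_of_analytic Metric.isOpen_ball a hφ n (Metric.mem_ball_self one_pos)]
  ring

lemma taylorCoeff_X_mul_zero (φ : ℂ → ℂ) :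
    taylorCoeff (fun z => z * φ z) 0 = 0 := by
  unfold taylorCoeff
  simp

lemma taylorCoeff_X_mul_succ {φ : ℂ → ℂ}
    (hφ : AnalyticOnNhd ℂ φ (Metric.ball (0:ℂ) 1)) (m : ℕ) :
    taylorCoeff (fun z => z * φ z) (m+1) = taylorCoeff φ m := by
  unfold taylorCoeff
  rw [iteratedDeriv_X_mul Metric.isOpen_ball (Metric.mem_ball_self one_pos) hφ m]
  rw [Nat.factorial_succ]
  push_cast
  have hm : ((m:ℂ) + 1) ≠ 0 := Nat.cast_add_one_ne_zero m
  have hf : ((m.factorial : ℂ)) ≠ 0 := Nat.cast_ne_zero.mpr m.factorial_ne_zero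
  field_simp

lemma taylorCoeff_pow_mul {φ : ℂ → ℂ}
    (hφ : AnalyticOnNhd ℂ φ (Metric.ball (0:ℂ) 1)) {m n : ℕ} (hmn : m < n) :
    taylorCoeff (fun z => z ^ n * φ z) m = 0 := by
  unfold taylorCoeff
  rw [iteratedDeriv_pow_mul Metric.isOpen_ball (Metric.mem_ball_self one_pos) hφ hmn]
  simp

lemma taylorCoeff_zero_fun (n : ℕ) : taylorCoeff (0 : ℂ → ℂ) n = 0 := by
  unfold taylorCoeff
  have : iteratedDeriv n (0 : ℂ → ℂ) = 0 := by
    induction n with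
    | zero => rfl
    | succ n ih =>
      rw [iteratedDeriv_succ, ih]
      funext x
      have h0 : (0 : ℂ → ℂ) = fun _ => (0:ℂ) := rfl
      rw [h0]
      simp
  rw [this]
  simp


noncomputable def Spoly (lam : ℂ) (n : ℕ) : Polynomial ℂ :=
  ∑ k ∈ Finset.range n, Polynomial.monomial k (lam ^ (n - 1 - k))

lemma Spoly_zero (lam : ℂ) : Spoly lam 0 = 0 := by
  unfold Spoly
  simp

lemma Spoly_eval_succ (lam : ℂ) (n : ℕ) (z : ℂ) :
    (Spoly lam (n+1)).eval z = lam ^ n + z * (Spoly lam n).eval z := by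
  unfold Spoly
  rw [Polynomial.eval_finset_sum, Polynomial.eval_finset_sum, Finset.sum_range_succ']
  simp only [Polynomial.eval_monomial]
  rw [Finset.mul_sum, add_comm]
  congr 1
  · simp
  · apply Finset.sum_congr rfl
    intro k hk
    have he : n + 1 - 1 - (k+1) = n - 1 - k := by omega
    rw [he]
    ring

lemma Spoly_eval_zero_key (lam : ℂ) (n : ℕ) :
    (0:ℂ)^n + lam * (Spoly lam n).eval 0 = lam ^ n := by
  cases n with
  | zero => simp [Spoly_zero]
  | succ n =>
    rw [Spoly_eval_succ]
    simp [pow_succ]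
    ring

lemma Spoly_coeff (lam : ℂ) {j n : ℕ} (h : j < n) :
    (Spoly lam n).coeff j = lam ^ (n - 1 - j) := by
  unfold Spoly
  rw [Polynomial.finset_sum_coeff]
  rw [Finset.sum_eq_single j]
  · rw [Polynomial.coeff_monomial, if_pos rfl]
  · intro k hk hkj
    rw [Polynomial.coeff_monomial, if_neg hkj]
  · intro hj
    exact absurd (Finset.mem_range.mpr h) hj

lemma coeff_mul_Spoly (p : Polynomial ℂ) (lam : ℂ) (m : ℕ) :
    (p * Spoly lam (m+1)).coeff m = ∑ i ∈ Finset.range (m+1), p.coeff i * lam ^ i := by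
  rw [Polynomial.coeff_mul, Finset.Nat.sum_antidiagonal_eq_sum_range_succ_mk]
  apply Finset.sum_congr rfl
  intro i hi
  have him : i ≤ m := Finset.mem_range_succ_iff.mp hi
  have hlt : m - i < m + 1 := by omega
  rw [Spoly_coeff lam hlt]
  have he : m + 1 - 1 - (m - i) = i := by omega
  rw [he]

section Telescope

variable {p q : Polynomial ℂ} {lam : ℂ}
  (hq : p = Polynomial.C (p.eval lam) + (Polynomial.X - Polynomial.C lam) * q)

include hq

lemma coeff_rel_zero : p.coeff 0 = p.eval lam - lam * q.coeff 0 := by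
  conv_lhs => rw [hq]
  rw [Polynomial.coeff_add, Polynomial.coeff_C, sub_mul, Polynomial.coeff_sub,
    Polynomial.mul_coeff_zero, Polynomial.coeff_C_mul, Polynomial.coeff_X_zero]
  simp
  ring

lemma coeff_rel_succ (m : ℕ) : p.coeff (m+1) = q.coeff m - lam * q.coeff (m+1) := by
  conv_lhs => rw [hq]
  rw [Polynomial.coeff_add, Polynomial.coeff_C, sub_mul, Polynomial.coeff_sub,
    Polynomial.coeff_X_mul, Polynomial.coeff_C_mul]
  simp

lemma telescope (m : ℕ) :
    ∑ i ∈ Finset.range (m+1), p.coeff i * lam ^ i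
      = p.eval lam - lam ^ (m+1) * q.coeff m := by
  induction m with
  | zero =>
    rw [Finset.sum_range_one, coeff_rel_zero hq]
    ring
  | succ m ih =>
    rw [Finset.sum_range_succ, ih, coeff_rel_succ hq m]
    ring

end Telescope


section FHS

open scoped InnerProductSpace

variable {H : Type*} [NormedAddCommGroup H] [InnerProductSpace ℂ H] [CompleteSpace H]
  (e : FunctionalHilbertSpace H) (f : H) (p : Polynomial ℂ)

lemma toFun_analytic (h : H) : AnalyticOnNhd ℂ (e.toFun h) (Metric.ball (0:ℂ) 1) :=
  (e.holo h).analyticOnNhd Metric.isOpen_ball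

lemma taylorCoeff_zero_apply (φ : ℂ → ℂ) : taylorCoeff φ 0 = φ 0 := by
  unfold taylorCoeff
  simp

lemma poly_analytic (q : Polynomial ℂ) :
    AnalyticOnNhd ℂ (fun z => q.eval z) (Metric.ball (0:ℂ) 1) :=
  (q.differentiable.differentiableOn).analyticOnNhd Metric.isOpen_ball

variable (hp : Set.EqOn (e.toFun f) (fun z => Polynomial.eval z p) (Metric.ball (0 : ℂ) 1))

include hp

lemma apply_T (h : H) : ∀ z ∈ Metric.ball (0:ℂ) 1,
    e.toFun ((e.Mz + rankOne f e.one) h) z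
      = z * e.toFun h z + e.toFun h 0 * Polynomial.eval z p := by
  have h1 : (e.Mz + rankOne f e.one) h = e.Mz h + (e.toFun h 0) • f := by
    rw [ContinuousLinearMap.add_apply]
    congr 1
    show (innerSL ℂ e.one).smulRight f h = (e.toFun h 0) • f
    rw [ContinuousLinearMap.smulRight_apply]
    rw [innerSL_apply_apply, e.inner_one h]
  intro z hz
  rw [h1, map_add, map_smul]
  show e.toFun (e.Mz h) z + (e.toFun h 0) • e.toFun f z = _
  rw [e.Mz_apply h z hz, smul_eq_mul, hp hz]

omit hp

lemma exists_poly (q : Polynomial ℂ) :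
    ∃ g : H, Set.EqOn (e.toFun g) (fun z => q.eval z) (Metric.ball (0:ℂ) 1) := by
  induction q using Polynomial.induction_on with
  | C a =>
    refine ⟨a • e.one, fun z hz => ?_⟩
    rw [map_smul]
    show a • e.toFun e.one z = _
    rw [e.one_apply z hz]
    simp
  | add r s hr hs =>
    obtain ⟨gr, hgr⟩ := hr
    obtain ⟨gs, hgs⟩ := hs
    refine ⟨gr + gs, fun z hz => ?_⟩
    rw [map_add]
    show e.toFun gr z + e.toFun gs z = _
    rw [hgr hz, hgs hz]
    simp
  | monomial n a hg =>
    obtain ⟨g, hg⟩ := hg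
    refine ⟨e.Mz g, fun z hz => ?_⟩
    rw [e.Mz_apply g z hz, hg hz]
    simp only [Polynomial.eval_mul, Polynomial.eval_pow, Polynomial.eval_C, Polynomial.eval_X]
    ring

include hp

lemma apply_T_pow (n : ℕ) (h : H) : ∀ z ∈ Metric.ball (0:ℂ) 1,
    e.toFun (((e.Mz + rankOne f e.one) ^ n) h) z
      = z ^ n * e.toFun h z
        + e.toFun h 0 * (p * Spoly (Polynomial.eval 0 p) n).eval z := by
  induction n with
  | zero =>
    intro z hz
    simp [Spoly_zero]
  | succ n ih =>
    intro z hz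
    have hstep : ((e.Mz + rankOne f e.one) ^ (n+1)) h
        = (e.Mz + rankOne f e.one) (((e.Mz + rankOne f e.one) ^ n) h) := by
      rw [pow_succ']
      rfl
    rw [hstep, apply_T e f p hp _ z hz, ih z hz, ih 0 (Metric.mem_ball_self one_pos)]
    rw [Polynomial.eval_mul, Polynomial.eval_mul, Polynomial.eval_mul, Spoly_eval_succ]
    have key := Spoly_eval_zero_key (Polynomial.eval 0 p) n
    linear_combination (e.toFun h 0 * Polynomial.eval z p) * key

omit hp

lemma mem_range_pow_of_eigen {T : H →L[ℂ] H} {g : H} {lam : ℂ} (hlam : lam ≠ 0)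
    (hg : T g = lam • g) (n : ℕ) : g ∈ Set.range ⇑(T ^ n) := by
  refine ⟨(lam⁻¹) ^ n • g, ?_⟩
  induction n with
  | zero => simp
  | succ n ih =>
    rw [pow_succ, ContinuousLinearMap.mul_apply, map_smul, hg, smul_smul]
    have hmul : lam⁻¹ ^ (n+1) * lam = lam⁻¹ ^ n := by
      rw [pow_succ, mul_assoc, inv_mul_cancel₀ hlam, mul_one]
    rw [hmul]
    exact ih

lemma g_eq_zero_of_tc (g : H) (h : ∀ m, taylorCoeff (e.toFun g) m = 0) : g = 0 := by
  apply e.sep g 0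
  have h0 : e.toFun (0 : H) = 0 := map_zero _
  rw [h0]
  apply eqOn_of_taylorCoeff_eq (e.holo g) (differentiable_const (0:ℂ)).differentiableOn
  intro n
  exact (h n).trans (taylorCoeff_zero_fun n).symm

include hp

lemma eigen_of_coeff (g : H) (lam : ℂ) (hg0 : e.toFun g 0 = lam)
    (h0 : lam * p.coeff 0 = lam * taylorCoeff (e.toFun g) 0)
    (hrec : ∀ m, taylorCoeff (e.toFun g) m + lam * p.coeff (m+1)
      = lam * taylorCoeff (e.toFun g) (m+1)) :
    (e.Mz + rankOne f e.one) g = lam • g := by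
  apply e.sep
  apply eqOn_of_taylorCoeff_eq (e.holo _) (e.holo _)
  intro m
  have hTg : Set.EqOn (e.toFun ((e.Mz + rankOne f e.one) g))
      (fun z => z * e.toFun g z + (fun w => (Polynomial.C lam * p).eval w) z)
      (Metric.ball (0:ℂ) 1) := by
    intro z hz
    rw [apply_T e f p hp g z hz]
    show _ = z * e.toFun g z + (Polynomial.C lam * p).eval z
    rw [Polynomial.eval_mul, Polynomial.eval_C, hg0]
  have hLam : e.toFun (lam • g) = fun z => lam * e.toFun g z := by
    rw [map_smul]
    rfl
  rw [taylorCoeff_congr Metric.isOpen_ball (Metric.mem_ball_self one_pos) hTg m, hLam]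
  have hzg : AnalyticOnNhd ℂ (fun z => z * e.toFun g z) (Metric.ball (0:ℂ) 1) :=
    analyticOnNhd_id.mul (toFun_analytic e g)
  rw [taylorCoeff_add hzg (poly_analytic (Polynomial.C lam * p)) m]
  rw [taylorCoeff_polyeval, Polynomial.coeff_C_mul]
  rw [taylorCoeff_const_mul lam (toFun_analytic e g) m]
  cases m with
  | zero =>
    rw [taylorCoeff_X_mul_zero]
    rw [zero_add]
    exact h0
  | succ m =>
    rw [taylorCoeff_X_mul_succ (toFun_analytic e g) m]
    exact hrec m

end FHS

end AuxFHS


-- MAIN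
theorem analytic_rankOne_perturbation_of_Mz_iff_of_polynomial
    {H : Type*} [NormedAddCommGroup H] [InnerProductSpace ℂ H] [CompleteSpace H]
    (e : FunctionalHilbertSpace H) (f : H) (p : Polynomial ℂ)
    (hp : Set.EqOn (e.toFun f) (fun z => Polynomial.eval z p) (Metric.ball (0 : ℂ) 1)) :
    (⋂ n : ℕ, Set.range ⇑((e.Mz + rankOne f e.one) ^ n)) = {0} ↔
      (Polynomial.eval 0 p = 0 ∨
        (Polynomial.eval 0 p ≠ 0 ∧
          Polynomial.eval (Polynomial.eval 0 p) p ≠ 0 ∧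
          ¬ ∃ h : H, ∀ j : ℕ, taylorCoeff (e.toFun h) j =
            1 / (Polynomial.eval 0 p) ^ (j + 1))) := by
  classical
  have hzero_mem : (0:H) ∈ ⋂ n : ℕ, Set.range ⇑((e.Mz + rankOne f e.one) ^ n) :=
    Set.mem_iInter.mpr (fun n => ⟨0, map_zero _⟩)
  have hmaster : ∀ g : H, g ∈ (⋂ n : ℕ, Set.range ⇑((e.Mz + rankOne f e.one) ^ n)) →
      ∀ m : ℕ, ∃ b : ℂ, e.toFun g 0 = b * (Polynomial.eval 0 p) ^ (m+1) ∧
        taylorCoeff (e.toFun g) m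
          = b * ∑ i ∈ Finset.range (m+1), p.coeff i * (Polynomial.eval 0 p) ^ i := by
    intro g hg m
    obtain ⟨h, hh⟩ := Set.mem_iInter.mp hg (m+1)
    refine ⟨e.toFun h 0, ?_, ?_⟩
    · have hv := AuxFHS.apply_T_pow e f p hp (m+1) h 0 (Metric.mem_ball_self one_pos)
      rw [hh] at hv
      rw [Polynomial.eval_mul] at hv
      have key := AuxFHS.Spoly_eval_zero_key (Polynomial.eval 0 p) (m+1)
      rw [hv]
      linear_combination e.toFun h 0 * key
    · have heq : Set.EqOn (e.toFun g)
          (fun z => z^(m+1) * e.toFun h z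
            + (fun w =>
              (Polynomial.C (e.toFun h 0) * (p * AuxFHS.Spoly (Polynomial.eval 0 p) (m+1))).eval w) z)
          (Metric.ball (0:ℂ) 1) := by
        intro z hz
        rw [← hh]
        rw [AuxFHS.apply_T_pow e f p hp (m+1) h z hz]
        simp only [Polynomial.eval_mul, Polynomial.eval_C]
      rw [AuxFHS.taylorCoeff_congr Metric.isOpen_ball (Metric.mem_ball_self one_pos) heq m]
      have hzn : AnalyticOnNhd ℂ (fun z => z^(m+1) * e.toFun h z) (Metric.ball (0:ℂ) 1) :=
        (analyticOnNhd_id.pow (m+1)).mul (AuxFHS.toFun_analytic e h)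
      rw [AuxFHS.taylorCoeff_add hzn (AuxFHS.poly_analytic _) m]
      rw [AuxFHS.taylorCoeff_pow_mul (AuxFHS.toFun_analytic e h) (Nat.lt_succ_self m)]
      rw [AuxFHS.taylorCoeff_polyeval, Polynomial.coeff_C_mul, AuxFHS.coeff_mul_Spoly]
      ring
  have hNA : ∀ g : H, (e.Mz + rankOne f e.one) g = (Polynomial.eval 0 p) • g →
      e.toFun g 0 = Polynomial.eval 0 p → Polynomial.eval 0 p ≠ 0 →
      ¬ ((⋂ n : ℕ, Set.range ⇑((e.Mz + rankOne f e.one) ^ n)) = {0}) := by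
    intro g hgeig hg0 hlne hEq
    have hmem : g ∈ ⋂ n : ℕ, Set.range ⇑((e.Mz + rankOne f e.one) ^ n) :=
      Set.mem_iInter.mpr (fun n => AuxFHS.mem_range_pow_of_eigen hlne hgeig n)
    rw [hEq] at hmem
    have hg_eq : g = (0:H) := hmem
    rw [hg_eq, map_zero] at hg0
    exact hlne hg0.symm
  have hp0 : p.coeff 0 = Polynomial.eval 0 p := Polynomial.coeff_zero_eq_eval_zero p
  by_cases hlam : Polynomial.eval 0 p = 0
  · refine iff_of_true ?_ (Or.inl hlam)
    apply Set.eq_singleton_iff_unique_mem.mpr ⟨hzero_mem, ?_⟩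
    intro g hg
    apply AuxFHS.g_eq_zero_of_tc e g
    intro m
    obtain ⟨b, hb0, hbm⟩ := hmaster g hg m
    rw [hbm]
    have hsum : ∑ i ∈ Finset.range (m+1), p.coeff i * (Polynomial.eval 0 p) ^ i = 0 := by
      rw [Finset.sum_eq_single 0]
      · rw [pow_zero, mul_one, hp0, hlam]
      · intro i hi hine
        rw [hlam, zero_pow hine, mul_zero]
      · intro habs
        simp at habs
    rw [hsum, mul_zero]
  · have hdvd : (Polynomial.X - Polynomial.C (Polynomial.eval 0 p))
        ∣ (p - Polynomial.C (p.eval (Polynomial.eval 0 p))) := by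
      apply Polynomial.dvd_iff_isRoot.mpr
      simp [Polynomial.IsRoot]
    obtain ⟨q, hq0⟩ := hdvd
    have hq : p = Polynomial.C (p.eval (Polynomial.eval 0 p))
        + (Polynomial.X - Polynomial.C (Polynomial.eval 0 p)) * q := by
      linear_combination hq0
    obtain ⟨gq, hgq⟩ := AuxFHS.exists_poly e q
    have htcq : ∀ m, taylorCoeff (e.toFun gq) m = q.coeff m := by
      intro m
      rw [AuxFHS.taylorCoeff_congr Metric.isOpen_ball (Metric.mem_ball_self one_pos) hgq m]
      exact AuxFHS.taylorCoeff_polyeval q m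
    have hr0 := AuxFHS.coeff_rel_zero hq
    have hrs := fun m => AuxFHS.coeff_rel_succ hq m
    by_cases hpl : p.eval (Polynomial.eval 0 p) = 0
    · refine iff_of_false ?_ ?_
      · -- eigenvector g := (-eval 0 p) • gq
        have hFg : ∀ m, taylorCoeff (e.toFun ((-(Polynomial.eval 0 p)) • gq)) m
            = -(Polynomial.eval 0 p) * q.coeff m := by
          intro m
          have hfn : e.toFun ((-(Polynomial.eval 0 p)) • gq)
              = fun z => -(Polynomial.eval 0 p) * e.toFun gq z := by
            rw [map_smul]; rfl
          rw [hfn, AuxFHS.taylorCoeff_const_mul _ (AuxFHS.toFun_analytic e gq) m, htcq m]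
        have hg0 : e.toFun ((-(Polynomial.eval 0 p)) • gq) 0 = Polynomial.eval 0 p := by
          have h00 := hFg 0
          rw [AuxFHS.taylorCoeff_zero_apply] at h00
          rw [h00]
          linear_combination hp0 - hr0 - hpl
        have heig : (e.Mz + rankOne f e.one) ((-(Polynomial.eval 0 p)) • gq)
            = (Polynomial.eval 0 p) • ((-(Polynomial.eval 0 p)) • gq) := by
          apply AuxFHS.eigen_of_coeff e f p hp _ _ hg0
          · rw [hFg 0]
            linear_combination (Polynomial.eval 0 p) * hr0 + (Polynomial.eval 0 p) * hpl
          · intro m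
            rw [hFg m, hFg (m+1)]
            linear_combination (Polynomial.eval 0 p) * hrs m
        exact hNA _ heig hg0 hlam
      · rintro (h | ⟨h1, h2, h3⟩)
        · exact hlam h
        · exact h2 hpl
    · constructor
      · intro hEq
        refine Or.inr ⟨hlam, hpl, ?_⟩
        rintro ⟨h, hcoef⟩
        set g := ((Polynomial.eval 0 p) * p.eval (Polynomial.eval 0 p)) • h
          + (-(Polynomial.eval 0 p)) • gq with hgdef
        have hFg : e.toFun g = fun z =>
            ((Polynomial.eval 0 p) * p.eval (Polynomial.eval 0 p)) * e.toFun h z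
            + (-(Polynomial.eval 0 p)) * e.toFun gq z := by
          rw [hgdef, map_add, map_smul, map_smul]; rfl
        have htc : ∀ m, taylorCoeff (e.toFun g) m
            = ((Polynomial.eval 0 p) * p.eval (Polynomial.eval 0 p))
                * (1 / (Polynomial.eval 0 p) ^ (m+1))
              + (-(Polynomial.eval 0 p)) * q.coeff m := by
          intro m
          rw [hFg]
          rw [AuxFHS.taylorCoeff_add
            (analyticOnNhd_const.mul (AuxFHS.toFun_analytic e h))
            (analyticOnNhd_const.mul (AuxFHS.toFun_analytic e gq)) m]
          rw [AuxFHS.taylorCoeff_const_mul _ (AuxFHS.toFun_analytic e h) m]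
          rw [AuxFHS.taylorCoeff_const_mul _ (AuxFHS.toFun_analytic e gq) m]
          rw [hcoef m, htcq m]
        have e1 : ∀ m : ℕ, Polynomial.eval 0 p * Polynomial.eval (Polynomial.eval 0 p) p
            * (1 / Polynomial.eval 0 p ^ (m+1))
            = Polynomial.eval (Polynomial.eval 0 p) p * (1 / Polynomial.eval 0 p ^ m) := by
          intro m
          rw [pow_succ]
          field_simp
        have htc' : ∀ m, taylorCoeff (e.toFun g) m
            = Polynomial.eval (Polynomial.eval 0 p) p * (1 / Polynomial.eval 0 p ^ m)
              + (-(Polynomial.eval 0 p)) * q.coeff m := by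
          intro m
          rw [htc m, e1 m]
        have hg0 : e.toFun g 0 = Polynomial.eval 0 p := by
          have h00 := htc' 0
          rw [AuxFHS.taylorCoeff_zero_apply] at h00
          rw [h00, pow_zero]
          linear_combination hp0 - hr0
        have heig : (e.Mz + rankOne f e.one) g = (Polynomial.eval 0 p) • g := by
          apply AuxFHS.eigen_of_coeff e f p hp _ _ hg0
          · rw [htc' 0, pow_zero]
            linear_combination (Polynomial.eval 0 p) * hr0
          · intro m
            rw [htc' m, htc' (m+1)]
            have e2 : Polynomial.eval 0 p * (Polynomial.eval (Polynomial.eval 0 p) p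
                * (1 / Polynomial.eval 0 p ^ (m+1)))
                = Polynomial.eval (Polynomial.eval 0 p) p * (1 / Polynomial.eval 0 p ^ m) := by
              rw [pow_succ]
              field_simp
            linear_combination (Polynomial.eval 0 p) * hrs m - e2
        exact absurd hEq (hNA g heig hg0 hlam)
      · rintro (h | ⟨h1, h2, h3⟩)
        · exact absurd h hlam
        · apply Set.eq_singleton_iff_unique_mem.mpr ⟨hzero_mem, ?_⟩
          intro g hg
          by_cases hc : e.toFun g 0 = 0
          · apply AuxFHS.g_eq_zero_of_tc e g
            intro m
            obtain ⟨b, hb0, hbm⟩ := hmaster g hg m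
            have hb : b = 0 := by
              rw [hc] at hb0
              rcases mul_eq_zero.mp hb0.symm with hend | hend
              · exact hend
              · exact absurd hend (pow_ne_zero _ hlam)
            rw [hbm, hb, zero_mul]
          · exfalso
            apply h3
            refine ⟨(e.toFun g 0 * p.eval (Polynomial.eval 0 p))⁻¹ • (g + (e.toFun g 0) • gq), ?_⟩
            intro j
            obtain ⟨b, hb0, hbm⟩ := hmaster g hg j
            have hFh : e.toFun ((e.toFun g 0 * p.eval (Polynomial.eval 0 p))⁻¹
                  • (g + (e.toFun g 0) • gq))
                = fun z => (e.toFun g 0 * p.eval (Polynomial.eval 0 p))⁻¹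
                    * (e.toFun g z + e.toFun g 0 * e.toFun gq z) := by
              rw [map_smul, map_add, map_smul]; rfl
            rw [hFh]
            have hsumA : AnalyticOnNhd ℂ (fun z => e.toFun g z + e.toFun g 0 * e.toFun gq z)
                (Metric.ball (0:ℂ) 1) :=
              (AuxFHS.toFun_analytic e g).add (analyticOnNhd_const.mul (AuxFHS.toFun_analytic e gq))
            rw [AuxFHS.taylorCoeff_const_mul _ hsumA j]
            rw [AuxFHS.taylorCoeff_add (AuxFHS.toFun_analytic e g)
              (analyticOnNhd_const.mul (AuxFHS.toFun_analytic e gq)) j]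
            rw [AuxFHS.taylorCoeff_const_mul _ (AuxFHS.toFun_analytic e gq) j, htcq j]
            rw [hbm, AuxFHS.telescope hq j]
            have hbne : b ≠ 0 := by
              intro hb
              rw [hb, zero_mul] at hb0
              exact hc hb0
            rw [hb0]
            field_simp
            ring
end
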